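/- arXiv:math/0504545 — 8 statements merged into one kernel-verified Lean document; each statement's English description precedes it below -/
import Mathlib

section
/- Let X be a complete metric space, let f₁, f₂ : X → X be contractions (Lipschitz maps with Lipschitz constants strictly less than 1), and let E be a nonempty compact subset of X with E = f₁(E) ∪ f₂(E) (the attractor of the iterated function system {f₁, f₂}). Then E is connected if and only if f₁(E) ∩ f₂(E) ≠ ∅. -/
theorem stmt5 {X : Type*} [MetricSpace X] [CompleteSpace X]
    (f₁ f₂ : X → X) (K₁ K₂ : NNReal) (hK₁ : K₁ < 1) (hK₂ : K₂ < 1)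
    (hf₁ : LipschitzWith K₁ f₁) (hf₂ : LipschitzWith K₂ f₂)
    (E : Set X) (hEc : IsCompact E) (hEne : E.Nonempty)
    (hE : E = f₁ '' E ∪ f₂ '' E) :
    IsConnected E ↔ (f₁ '' E ∩ f₂ '' E).Nonempty := by
  have h1E : f₁ '' E ⊆ E := Set.subset_union_left.trans hE.ge
  have h2E : f₂ '' E ⊆ E := Set.subset_union_right.trans hE.ge
  constructor
  · -- connected → intersection nonempty
    intro hconn
    by_contra hemp
    rw [Set.not_nonempty_iff_eq_empty] at hemp
    have hdisj : Disjoint (f₁ '' E) (f₂ '' E) := Set.disjoint_iff_inter_eq_empty.2 hemp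
    have hc1 : IsCompact (f₁ '' E) := hEc.image hf₁.continuous
    have hc2 : IsCompact (f₂ '' E) := hEc.image hf₂.continuous
    obtain ⟨U, V, hU, hV, hAU, hBV, hUV⟩ :=
      SeparatedNhds.of_isCompact_isCompact hc1 hc2 hdisj
    have := hconn.isPreconnected U V hU hV
      (by rw [hE]; exact Set.union_subset_union hAU hBV)
      ⟨f₁ hEne.some, h1E ⟨hEne.some, hEne.some_mem, rfl⟩,
        hAU ⟨hEne.some, hEne.some_mem, rfl⟩⟩
      ⟨f₂ hEne.some, h2E ⟨hEne.some, hEne.some_mem, rfl⟩,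
        hBV ⟨hEne.some, hEne.some_mem, rfl⟩⟩
    obtain ⟨x, _, hxU, hxV⟩ := this
    exact hUV.le_bot ⟨hxU, hxV⟩
  · -- intersection nonempty → connected
    rintro ⟨p, ⟨a, ha, hpa⟩, ⟨b, hb, hpb⟩⟩
    set c : ℝ := max (K₁ : ℝ) (K₂ : ℝ) with hc
    have hc0 : 0 ≤ c := le_max_of_le_left K₁.coe_nonneg
    have hc1 : c < 1 := max_lt (by exact_mod_cast hK₁) (by exact_mod_cast hK₂)
    set D : ℝ := Metric.diam E with hD
    have hD0 : 0 ≤ D := Metric.diam_nonneg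
    -- chain relation
    set R : ℝ → X → X → Prop := fun ε x y => y ∈ E ∧ dist x y ≤ ε with hR
    have lift₁ : ∀ n : ℕ, ∀ u v, R (c ^ n * D) u v →
        R (c ^ (n + 1) * D) (f₁ u) (f₁ v) := by
      rintro n u v ⟨hv, hd⟩
      refine ⟨h1E ⟨v, hv, rfl⟩, ?_⟩
      calc dist (f₁ u) (f₁ v) ≤ (K₁ : ℝ) * dist u v := hf₁.dist_le_mul u v
        _ ≤ c * (c ^ n * D) := by
            apply mul_le_mul (le_max_left _ _) hd dist_nonneg hc0
        _ = c ^ (n + 1) * D := by ring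
    have lift₂ : ∀ n : ℕ, ∀ u v, R (c ^ n * D) u v →
        R (c ^ (n + 1) * D) (f₂ u) (f₂ v) := by
      rintro n u v ⟨hv, hd⟩
      refine ⟨h2E ⟨v, hv, rfl⟩, ?_⟩
      calc dist (f₂ u) (f₂ v) ≤ (K₂ : ℝ) * dist u v := hf₂.dist_le_mul u v
        _ ≤ c * (c ^ n * D) := by
            apply mul_le_mul (le_max_right _ _) hd dist_nonneg hc0
        _ = c ^ (n + 1) * D := by ring
    have chain : ∀ n : ℕ, ∀ x ∈ E, ∀ y ∈ E,
        Relation.ReflTransGen (R (c ^ n * D)) x y := by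
      intro n
      induction n with
      | zero =>
        intro x hx y hy
        exact Relation.ReflTransGen.single
          ⟨hy, by simpa using Metric.dist_le_diam_of_mem hEc.isBounded hx hy⟩
      | succ n ih =>
        intro x hx y hy
        rw [hE] at hx hy
        rcases hx with ⟨x', hx', rfl⟩ | ⟨x', hx', rfl⟩ <;>
          rcases hy with ⟨y', hy', rfl⟩ | ⟨y', hy', rfl⟩
        · exact Relation.ReflTransGen.lift (r := R (c ^ n * D)) (p := R (c ^ (n + 1) * D)) f₁ (lift₁ n) _ _ (ih x' hx' y' hy')
        · refine Relation.ReflTransGen.trans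
            (Relation.ReflTransGen.lift (r := R (c ^ n * D)) (p := R (c ^ (n + 1) * D)) f₁ (lift₁ n) _ _ (ih x' hx' a ha)) ?_
          rw [hpa, ← hpb]
          exact Relation.ReflTransGen.lift (r := R (c ^ n * D)) (p := R (c ^ (n + 1) * D)) f₂ (lift₂ n) _ _ (ih b hb y' hy')
        · refine Relation.ReflTransGen.trans
            (Relation.ReflTransGen.lift (r := R (c ^ n * D)) (p := R (c ^ (n + 1) * D)) f₂ (lift₂ n) _ _ (ih x' hx' b hb)) ?_
          rw [hpb, ← hpa]
          exact Relation.ReflTransGen.lift (r := R (c ^ n * D)) (p := R (c ^ (n + 1) * D)) f₁ (lift₁ n) _ _ (ih a ha y' hy')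
        · exact Relation.ReflTransGen.lift (r := R (c ^ n * D)) (p := R (c ^ (n + 1) * D)) f₂ (lift₂ n) _ _ (ih x' hx' y' hy')
    refine ⟨hEne, ?_⟩
    rw [isPreconnected_iff_subset_of_disjoint_closed] at *
    intro A B hA hB hEAB hABdisj
    by_contra hnot
    push_neg at hnot
    obtain ⟨hnA, hnB⟩ := hnot
    -- E ∩ A and E ∩ B are disjoint nonempty compacts
    have hAne : (E ∩ A).Nonempty := by
      rcases Set.not_subset.1 hnB with ⟨x, hxE, hxB⟩
      exact ⟨x, hxE, (hEAB hxE).resolve_right hxB⟩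
    have hBne : (E ∩ B).Nonempty := by
      rcases Set.not_subset.1 hnA with ⟨x, hxE, hxA⟩
      exact ⟨x, hxE, (hEAB hxE).resolve_left hxA⟩
    have hcA : IsCompact (E ∩ A) := hEc.inter_right hA
    have hcB : IsCompact (E ∩ B) := hEc.inter_right hB
    -- positive distance δ between them
    have hdisj2 : ∀ x ∈ E ∩ A, x ∉ E ∩ B := by
      intro x hx hx'
      have : x ∈ E ∩ (A ∩ B) := ⟨hx.1, hx.2, hx'.2⟩
      rw [hABdisj] at this; exact this
    obtain ⟨x₀, hx₀, hx₀min⟩ := hcA.exists_isMinOn hAne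
      (Metric.continuous_infDist_pt (E ∩ B)).continuousOn
    set δ : ℝ := Metric.infDist x₀ (E ∩ B) with hδ
    have hδpos : 0 < δ :=
      ((hcB.isClosed.notMem_iff_infDist_pos hBne).1 (hdisj2 x₀ hx₀))
    have hdistge : ∀ x ∈ E ∩ A, ∀ y ∈ E ∩ B, δ ≤ dist x y := fun x hx y hy =>
      (hx₀min hx).trans (Metric.infDist_le_dist_of_mem hy)
    -- find n with c^n * D < δ
    have htend : Filter.Tendsto (fun n : ℕ => c ^ n * D) Filter.atTop (nhds 0) := by
      simpa using (tendsto_pow_atTop_nhds_zero_of_lt_one hc0 hc1).mul_const D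
    obtain ⟨n, hn⟩ := (htend.eventually (eventually_lt_nhds hδpos)).exists
    -- follow a chain from E∩A to E∩B
    obtain ⟨xa, hxa⟩ := hAne
    obtain ⟨xb, hxb⟩ := hBne
    have key : ∀ z, Relation.ReflTransGen (R (c ^ n * D)) xa z → z ∈ E ∩ A := by
      intro z hz
      induction hz with
      | refl => exact hxa
      | tail h₁ h₂ ih =>
        rename_i u v
        rcases hEAB h₂.1 with h | h
        · exact ⟨h₂.1, h⟩
        · exact absurd (h₂.2.trans_lt hn) (not_lt.2 (hdistge u ih v ⟨h₂.1, h⟩))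
    exact hdisj2 xb (key xb (chain n xa hxa.1 xb hxb.1)) hxb
end

section
/- Let V be a finite-dimensional real normed vector space, let T₁, T₂ : V → V be continuous linear maps with operator norms ‖T₁‖ < 1 and ‖T₂‖ < 1, let b ∈ V, and let E be a nonempty compact subset of V satisfying E = T₁(E) ∪ (T₂(E) + b) (the attractor of the affine IFS {T₁x, T₂x + b}). If |det T₁| + |det T₂| ≥ 1, then E is connected. -/
open Metric MeasureTheory Set ENNReal NNReal

/-- Gap between a compact set and a disjoint closed set. -/
lemma auxGap6 {X : Type*} [MetricSpace X] {A B : Set X} (hA : IsCompact A) (hB : IsClosed B)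
    (hd : Disjoint A B) : ∃ δ > 0, ∀ a ∈ A, ∀ b ∈ B, δ ≤ dist a b := by
  obtain ⟨r, hr, h⟩ := EMetric.exists_pos_forall_lt_edist hA hB hd
  refine ⟨r, hr, fun a ha b hb => ?_⟩
  have h2 := ENNReal.toReal_mono (edist_ne_top a b) (h a ha b hb).le
  simpa [dist_edist] using h2

lemma auxDetLtOne6 {V : Type*} [NormedAddCommGroup V] [NormedSpace ℝ V] [FiniteDimensional ℝ V]
    [Nontrivial V] (T : V →L[ℝ] V) (h : ‖T‖ < 1) :
    |LinearMap.det (T : V →ₗ[ℝ] V)| < 1 := by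
  borelize V
  set μ : Measure V := MeasureTheory.Measure.addHaar with hμ
  have hT0 : (0:ℝ) ≤ ‖T‖ := norm_nonneg T
  have himg : ⇑T '' closedBall 0 1 ⊆ closedBall (0:V) ‖T‖ := by
    rintro _ ⟨x, hx, rfl⟩
    simp only [mem_closedBall, dist_zero_right] at hx ⊢
    calc ‖T x‖ ≤ ‖T‖ * ‖x‖ := T.le_opNorm x
    _ ≤ ‖T‖ * 1 := by gcongr
    _ = ‖T‖ := mul_one _
  have h1 : ENNReal.ofReal |LinearMap.det (T : V →ₗ[ℝ] V)| * μ (closedBall 0 1)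
      ≤ ENNReal.ofReal (‖T‖ ^ Module.finrank ℝ V) * μ (closedBall 0 1) := by
    rw [← μ.addHaar_image_continuousLinearMap T (closedBall 0 1),
      ← Measure.addHaar_closedBall' μ (0:V) hT0]
    exact measure_mono himg
  have hpos : μ (closedBall (0:V) 1) ≠ 0 :=
    (measure_closedBall_pos μ (0:V) one_pos).ne'
  have hfin : μ (closedBall (0:V) 1) ≠ ⊤ :=
    (isCompact_closedBall _ _).measure_lt_top.ne
  have h2 : |LinearMap.det (T : V →ₗ[ℝ] V)| ≤ ‖T‖ ^ Module.finrank ℝ V := by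
    have := (ENNReal.mul_le_mul_iff_left hpos hfin).mp h1
    rwa [ENNReal.ofReal_le_ofReal_iff (by positivity)] at this
  calc |LinearMap.det (T : V →ₗ[ℝ] V)| ≤ ‖T‖ ^ Module.finrank ℝ V := h2
    _ < 1 := pow_lt_one₀ hT0 h Module.finrank_pos.ne'

/-- The two pieces of the attractor overlap. -/
lemma auxOverlap6 {V : Type*} [NormedAddCommGroup V] [NormedSpace ℝ V] [FiniteDimensional ℝ V]
    [Nontrivial V]
    (T₁ T₂ : V →L[ℝ] V) (h₁ : ‖T₁‖ < 1) (h₂ : ‖T₂‖ < 1) (b : V)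
    (E : Set V) (hEc : IsCompact E) (hEne : E.Nonempty)
    (hE : E = (fun x => T₁ x) '' E ∪ (fun x => T₂ x + b) '' E)
    (hdet : 1 ≤ |LinearMap.det (T₁ : V →ₗ[ℝ] V)| + |LinearMap.det (T₂ : V →ₗ[ℝ] V)|) :
    ((fun x => T₁ x) '' E ∩ (fun x => T₂ x + b) '' E).Nonempty := by
  by_contra hcap
  rw [Set.not_nonempty_iff_eq_empty] at hcap
  borelize V
  set μ : Measure V := MeasureTheory.Measure.addHaar with hμ
  have hd₁ : |LinearMap.det (T₁ : V →ₗ[ℝ] V)| < 1 := auxDetLtOne6 T₁ h₁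
  have hd₂ : |LinearMap.det (T₂ : V →ₗ[ℝ] V)| < 1 := auxDetLtOne6 T₂ h₂
  have hd₁0 : LinearMap.det (T₁ : V →ₗ[ℝ] V) ≠ 0 := by
    intro h; rw [h] at hdet; simp at hdet; linarith
  have hd₂0 : LinearMap.det (T₂ : V →ₗ[ℝ] V) ≠ 0 := by
    intro h; rw [h] at hdet; simp at hdet; linarith
  set K₁ : Set V := (fun x => T₁ x) '' E with hK₁
  set K₂ : Set V := (fun x => T₂ x + b) '' E with hK₂
  have hK₁c : IsCompact K₁ := hEc.image T₁.continuous
  have hK₂c : IsCompact K₂ := hEc.image (T₂.continuous.add continuous_const)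
  have hK₁E : K₁ ⊆ E := hE ▸ Set.subset_union_left
  have hK₂E : K₂ ⊆ E := hE ▸ Set.subset_union_right
  have hdisjK : Disjoint K₁ K₂ := Set.disjoint_iff_inter_eq_empty.mpr hcap
  obtain ⟨δ₀, hδ₀, hgap⟩ := auxGap6 hK₁c hK₂c.isClosed hdisjK
  set δ : ℝ := δ₀ / 3 with hδdef
  have hδ : 0 < δ := by positivity
  set c : ℝ := max ‖T₁‖ ‖T₂‖ with hcdef
  have hc0 : 0 ≤ c := le_trans (norm_nonneg T₁) (le_max_left _ _)
  have hc1 : c < 1 := max_lt h₁ h₂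
  have hcδ : c * δ < δ := by nlinarith
  set N : Set V := thickening δ E with hN
  have hNopen : IsOpen N := isOpen_thickening
  obtain ⟨x₀, hx₀⟩ := hEne
  have hNne : x₀ ∈ N := self_subset_thickening hδ E hx₀
  -- images of N are close to K₁, K₂
  have himg1 : ∀ x ∈ (fun y => T₁ y) '' N, ∃ k ∈ K₁, dist x k ≤ c * δ := by
    rintro _ ⟨y, hy, rfl⟩
    obtain ⟨e, he, hde⟩ := mem_thickening_iff.mp hy
    refine ⟨T₁ e, ⟨e, he, rfl⟩, ?_⟩
    have hl : dist (T₁ y) (T₁ e) ≤ ‖T₁‖ * dist y e := by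
      rw [dist_eq_norm, dist_eq_norm, ← map_sub]
      exact T₁.le_opNorm _
    calc dist (T₁ y) (T₁ e) ≤ ‖T₁‖ * dist y e := hl
      _ ≤ c * δ := mul_le_mul (le_max_left _ _) hde.le dist_nonneg hc0
  have himg2 : ∀ x ∈ (fun y => T₂ y + b) '' N, ∃ k ∈ K₂, dist x k ≤ c * δ := by
    rintro _ ⟨y, hy, rfl⟩
    obtain ⟨e, he, hde⟩ := mem_thickening_iff.mp hy
    refine ⟨T₂ e + b, ⟨e, he, rfl⟩, ?_⟩
    have hl : dist (T₂ y + b) (T₂ e + b) ≤ ‖T₂‖ * dist y e := by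
      rw [dist_add_right, dist_eq_norm, dist_eq_norm, ← map_sub]
      exact T₂.le_opNorm _
    calc dist (T₂ y + b) (T₂ e + b) ≤ ‖T₂‖ * dist y e := hl
      _ ≤ c * δ := mul_le_mul (le_max_right _ _) hde.le dist_nonneg hc0
  set A₁ : Set V := (fun y => T₁ y) '' N with hA₁
  set A₂ : Set V := (fun y => T₂ y + b) '' N with hA₂
  -- find the point p at intermediate distance from E
  set m : ℝ := (c * δ + δ) / 2 with hmdef
  set r : ℝ := (δ - c * δ) / 4 with hrdef
  have hm0 : 0 ≤ m := by positivity
  have hr0 : 0 < r := by rw [hrdef]; linarith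
  obtain ⟨v, hv⟩ := exists_ne (0 : V)
  obtain ⟨R, hR⟩ := hEc.isBounded.subset_closedBall x₀
  have hR0 : 0 ≤ R := by simpa using hR hx₀
  have hvnorm : ‖(‖v‖⁻¹ • v : V)‖ = 1 := by
    have hv0 : ‖v‖ ≠ 0 := norm_ne_zero_iff.mpr hv
    rw [norm_smul, norm_inv, norm_norm, inv_mul_cancel₀ hv0]
  set w : V := (R + m + 1) • (‖v‖⁻¹ • v) with hw
  have hwnorm : ‖w‖ = R + m + 1 := by
    rw [hw, norm_smul, hvnorm, mul_one, Real.norm_eq_abs, abs_of_nonneg (by linarith)]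
  set γ : ℝ → V := fun t => x₀ + t • w with hγ
  have hγcont : Continuous γ := continuous_const.add (continuous_id.smul continuous_const)
  have hγ0 : Metric.infDist (γ 0) E = 0 := by
    simp only [hγ, zero_smul, add_zero]
    exact infDist_zero_of_mem hx₀
  have hγ1 : m + 1 ≤ Metric.infDist (γ 1) E := by
    by_contra hlt
    push_neg at hlt
    obtain ⟨e, he, hde⟩ := (infDist_lt_iff ⟨x₀, hx₀⟩).mp hlt
    have hd1 : dist (γ 1) x₀ = R + m + 1 := by
      simp only [hγ, one_smul, dist_eq_norm, add_sub_cancel_left, hwnorm]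
    have hd2 : dist e x₀ ≤ R := by simpa using hR he
    have htri := dist_triangle (γ 1) e x₀
    rw [hd1] at htri
    linarith
  obtain ⟨t, _, hpt⟩ := intermediate_value_Icc (zero_le_one (α := ℝ))
    (((continuous_infDist_pt E).comp hγcont).continuousOn) (a := 0) (b := 1)
    (show m ∈ Icc _ _ by
      constructor
      · simpa [hγ0] using hm0
      · exact le_trans (by linarith) hγ1)
  set p : V := γ t with hp
  have hpm : Metric.infDist p E = m := hpt
  set B : Set V := ball p r with hB
  have hBE : ∀ q ∈ B, c * δ < Metric.infDist q E := by
    intro q hq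
    have h3 := infDist_le_infDist_add_dist (x := p) (y := q) (s := E)
    have h4 : dist p q < r := mem_ball'.mp hq
    rw [hpm] at h3
    rw [hmdef] at h3; rw [hrdef] at h4
    linarith
  have hBN : B ⊆ N := by
    intro q hq
    apply (mem_thickening_iff_infDist_lt ⟨x₀, hx₀⟩).mpr
    have h3 := infDist_le_infDist_add_dist (x := q) (y := p) (s := E)
    have h4 : dist q p < r := mem_ball.mp hq
    rw [hpm] at h3
    rw [hmdef] at h3; rw [hrdef] at h4
    linarith
  have hA₁N : A₁ ⊆ N := by
    intro x hx
    obtain ⟨k, hk, hdk⟩ := himg1 x hx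
    exact mem_thickening_iff.mpr ⟨k, hK₁E hk, lt_of_le_of_lt hdk hcδ⟩
  have hA₂N : A₂ ⊆ N := by
    intro x hx
    obtain ⟨k, hk, hdk⟩ := himg2 x hx
    exact mem_thickening_iff.mpr ⟨k, hK₂E hk, lt_of_le_of_lt hdk hcδ⟩
  have hA12 : Disjoint A₁ A₂ := by
    rw [Set.disjoint_left]
    intro x hx1 hx2
    obtain ⟨k₁, hk₁, hdk₁⟩ := himg1 x hx1
    obtain ⟨k₂, hk₂, hdk₂⟩ := himg2 x hx2
    have hg := hgap k₁ hk₁ k₂ hk₂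
    have htri := dist_triangle k₁ x k₂
    rw [dist_comm k₁ x] at htri
    have : δ₀ ≤ 2 * (c * δ) := by linarith
    rw [hδdef] at hcδ
    linarith
  have hA₁B : Disjoint A₁ B := by
    rw [Set.disjoint_right]
    intro q hq hq1
    obtain ⟨k, hk, hdk⟩ := himg1 q hq1
    have := le_trans (infDist_le_dist_of_mem (hK₁E hk)) hdk
    exact absurd this (not_le.mpr (hBE q hq))
  have hA₂B : Disjoint A₂ B := by
    rw [Set.disjoint_right]
    intro q hq hq1
    obtain ⟨k, hk, hdk⟩ := himg2 q hq1
    have := le_trans (infDist_le_dist_of_mem (hK₂E hk)) hdk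
    exact absurd this (not_le.mpr (hBE q hq))
  -- measurability
  have hA₂comp : A₂ = (fun y => y + b) '' ((fun y => T₂ y) '' N) := by
    rw [← Set.image_comp]; rfl
  have hT₂open : IsOpen ((fun y => T₂ y) '' N) := by
    let e₂ : V ≃L[ℝ] V :=
      LinearEquiv.toContinuousLinearEquiv (LinearMap.equivOfDetNeZero _ hd₂0)
    have he : (fun y => T₂ y) = ⇑e₂.toHomeomorph := rfl
    rw [he]
    exact e₂.toHomeomorph.isOpenMap N hNopen
  have hA₁open : IsOpen A₁ := by
    let e₁ : V ≃L[ℝ] V :=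
      LinearEquiv.toContinuousLinearEquiv (LinearMap.equivOfDetNeZero _ hd₁0)
    have he : (fun y => T₁ y) = ⇑e₁.toHomeomorph := rfl
    rw [hA₁, he]
    exact e₁.toHomeomorph.isOpenMap N hNopen
  have hA₂open : IsOpen A₂ := by
    rw [hA₂comp]
    exact (Homeomorph.addRight b).isOpenMap _ hT₂open
  -- measures
  have hμA₁ : μ A₁ = ENNReal.ofReal |LinearMap.det (T₁ : V →ₗ[ℝ] V)| * μ N :=
    μ.addHaar_image_continuousLinearMap T₁ N
  have hμA₂ : μ A₂ = ENNReal.ofReal |LinearMap.det (T₂ : V →ₗ[ℝ] V)| * μ N := by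
    rw [hA₂comp, Set.image_add_right, measure_preimage_add_right]
    exact μ.addHaar_image_continuousLinearMap T₂ N
  have hμN0 : μ N ≠ 0 := (hNopen.measure_pos μ ⟨x₀, hNne⟩).ne'
  have hμNfin : μ N ≠ ⊤ := hEc.isBounded.thickening.measure_lt_top.ne
  have hμB0 : 0 < μ B := measure_ball_pos μ p hr0
  have hsum : μ A₁ + μ A₂ + μ B ≤ μ N := by
    calc μ A₁ + μ A₂ + μ B = μ (A₁ ∪ A₂) + μ B := by
          rw [measure_union hA12 hA₂open.measurableSet]
      _ = μ (A₁ ∪ A₂ ∪ B) := by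
          rw [measure_union (Disjoint.union_left hA₁B hA₂B) measurableSet_ball]
      _ ≤ μ N := measure_mono (by
          apply Set.union_subset (Set.union_subset hA₁N hA₂N) hBN)
  have hone : (1 : ℝ≥0∞) ≤ ENNReal.ofReal |LinearMap.det (T₁ : V →ₗ[ℝ] V)|
      + ENNReal.ofReal |LinearMap.det (T₂ : V →ₗ[ℝ] V)| := by
    rw [← ENNReal.ofReal_add (abs_nonneg _) (abs_nonneg _), ← ENNReal.ofReal_one]
    exact ENNReal.ofReal_le_ofReal hdet
  have hfinal : μ N + μ B ≤ μ N + 0 := by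
    calc μ N + μ B = 1 * μ N + μ B := by rw [one_mul]
      _ ≤ (ENNReal.ofReal |LinearMap.det (T₁ : V →ₗ[ℝ] V)|
          + ENNReal.ofReal |LinearMap.det (T₂ : V →ₗ[ℝ] V)|) * μ N + μ B := by
          gcongr
      _ = μ A₁ + μ A₂ + μ B := by rw [add_mul, hμA₁, hμA₂]
      _ ≤ μ N := hsum
      _ = μ N + 0 := (add_zero _).symm
  have : μ B ≤ 0 := (ENNReal.add_le_add_iff_left hμNfin).mp hfinal
  exact absurd (le_antisymm this (zero_le)) hμB0.ne'

theorem stmt6 {V : Type*} [NormedAddCommGroup V] [NormedSpace ℝ V] [FiniteDimensional ℝ V]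
    (T₁ T₂ : V →L[ℝ] V) (h₁ : ‖T₁‖ < 1) (h₂ : ‖T₂‖ < 1) (b : V)
    (E : Set V) (hEc : IsCompact E) (hEne : E.Nonempty)
    (hE : E = (fun x => T₁ x) '' E ∪ (fun x => T₂ x + b) '' E)
    (hdet : 1 ≤ |LinearMap.det (T₁ : V →ₗ[ℝ] V)| + |LinearMap.det (T₂ : V →ₗ[ℝ] V)|) :
    IsConnected E := by
  rcases subsingleton_or_nontrivial V with hV | hV
  · refine ⟨hEne, fun u v _ _ _ h1 h2 => ?_⟩
    obtain ⟨a, ha, hau⟩ := h1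
    obtain ⟨a', ha', ha'v⟩ := h2
    exact ⟨a, ha, hau, Subsingleton.elim a' a ▸ ha'v⟩
  obtain ⟨z, hz₁, hz₂⟩ := auxOverlap6 T₁ T₂ h₁ h₂ b E hEc hEne hE hdet
  set c : ℝ := max ‖T₁‖ ‖T₂‖ with hcdef
  have hc0 : 0 ≤ c := le_trans (norm_nonneg T₁) (le_max_left _ _)
  have hc1 : c < 1 := max_lt h₁ h₂
  set D : ℝ := Metric.diam E with hD
  have hD0 : 0 ≤ D := Metric.diam_nonneg
  have hsub1 : (fun x => T₁ x) '' E ⊆ E := by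
    conv_rhs => rw [hE]
    exact Set.subset_union_left
  have hsub2 : (fun x => T₂ x + b) '' E ⊆ E := by
    conv_rhs => rw [hE]
    exact Set.subset_union_right
  set S : ℝ → V → V → Prop := fun ρ x y => x ∈ E ∧ y ∈ E ∧ dist x y ≤ ρ with hS
  -- chain claim
  have claim : ∀ n : ℕ, ∀ x ∈ E, ∀ y ∈ E, Relation.ReflTransGen (S (c ^ n * D)) x y := by
    intro n
    induction n with
    | zero =>
      intro x hx y hy
      refine Relation.ReflTransGen.single ⟨hx, hy, ?_⟩
      simpa using Metric.dist_le_diam_of_mem hEc.isBounded hx hy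
    | succ n ih =>
      have hstep : (0:ℝ) ≤ c ^ n * D := by positivity
      have l₁ : ∀ x y : V, Relation.ReflTransGen (S (c ^ n * D)) x y →
          Relation.ReflTransGen (S (c ^ (n + 1) * D)) (T₁ x) (T₁ y) := by
        intro x y h
        refine Relation.ReflTransGen.lift (fun a => T₁ a) ?_ _ _ h
        rintro a a' ⟨ha, ha', hd⟩
        refine ⟨hsub1 ⟨a, ha, rfl⟩, hsub1 ⟨a', ha', rfl⟩, ?_⟩
        have hl : dist (T₁ a) (T₁ a') ≤ ‖T₁‖ * dist a a' := by
          rw [dist_eq_norm, dist_eq_norm, ← map_sub]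
          exact T₁.le_opNorm _
        calc dist (T₁ a) (T₁ a') ≤ ‖T₁‖ * dist a a' := hl
          _ ≤ c * (c ^ n * D) := mul_le_mul (le_max_left _ _) hd dist_nonneg hc0
          _ = c ^ (n + 1) * D := by ring
      have l₂ : ∀ x y : V, Relation.ReflTransGen (S (c ^ n * D)) x y →
          Relation.ReflTransGen (S (c ^ (n + 1) * D)) (T₂ x + b) (T₂ y + b) := by
        intro x y h
        refine Relation.ReflTransGen.lift (fun a => T₂ a + b) ?_ _ _ h
        rintro a a' ⟨ha, ha', hd⟩
        refine ⟨hsub2 ⟨a, ha, rfl⟩, hsub2 ⟨a', ha', rfl⟩, ?_⟩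
        have hl : dist (T₂ a + b) (T₂ a' + b) ≤ ‖T₂‖ * dist a a' := by
          rw [dist_add_right, dist_eq_norm, dist_eq_norm, ← map_sub]
          exact T₂.le_opNorm _
        calc dist (T₂ a + b) (T₂ a' + b) ≤ ‖T₂‖ * dist a a' := hl
          _ ≤ c * (c ^ n * D) := mul_le_mul (le_max_right _ _) hd dist_nonneg hc0
          _ = c ^ (n + 1) * D := by ring
      intro x hx y hy
      rw [hE] at hx hy
      obtain ⟨z₁, hz₁m, hz₁e⟩ := hz₁
      obtain ⟨z₂, hz₂m, hz₂e⟩ := hz₂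
      rcases hx with ⟨x', hx', rfl⟩ | ⟨x', hx', rfl⟩ <;>
        rcases hy with ⟨y', hy', rfl⟩ | ⟨y', hy', rfl⟩
      · exact l₁ x' y' (ih x' hx' y' hy')
      · have c1 := l₁ x' z₁ (ih x' hx' z₁ hz₁m)
        have c2 := l₂ z₂ y' (ih z₂ hz₂m y' hy')
        rw [show T₁ z₁ = z from hz₁e] at c1
        rw [show T₂ z₂ + b = z from hz₂e] at c2
        exact c1.trans c2
      · have c1 := l₂ x' z₂ (ih x' hx' z₂ hz₂m)
        have c2 := l₁ z₁ y' (ih z₁ hz₁m y' hy')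
        rw [show T₂ z₂ + b = z from hz₂e] at c1
        rw [show T₁ z₁ = z from hz₁e] at c2
        exact c1.trans c2
      · exact l₂ x' y' (ih x' hx' y' hy')
  -- now prove preconnectedness
  refine ⟨hEne, ?_⟩
  rintro u v hu hv hEuv ⟨a, haE, hau⟩ ⟨a', ha'E, ha'v⟩
  by_contra hcon
  rw [Set.not_nonempty_iff_eq_empty] at hcon
  set A : Set V := E ∩ u with hA
  set B : Set V := E ∩ v with hB
  have hAcompl : A = E ∩ vᶜ := by
    ext x
    constructor
    · rintro ⟨hxE, hxu⟩
      refine ⟨hxE, fun hxv => ?_⟩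
      have : x ∈ E ∩ (u ∩ v) := ⟨hxE, hxu, hxv⟩
      rw [hcon] at this
      exact this
    · rintro ⟨hxE, hxv⟩
      rcases hEuv hxE with h | h
      · exact ⟨hxE, h⟩
      · exact absurd h hxv
  have hBcompl : B = E ∩ uᶜ := by
    ext x
    constructor
    · rintro ⟨hxE, hxv⟩
      refine ⟨hxE, fun hxu => ?_⟩
      have : x ∈ E ∩ (u ∩ v) := ⟨hxE, hxu, hxv⟩
      rw [hcon] at this
      exact this
    · rintro ⟨hxE, hxu⟩
      rcases hEuv hxE with h | h
      · exact absurd h hxu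
      · exact ⟨hxE, h⟩
  have hAc : IsCompact A := by
    rw [hAcompl]; exact hEc.inter_right hv.isClosed_compl
  have hBc : IsCompact B := by
    rw [hBcompl]; exact hEc.inter_right hu.isClosed_compl
  have hABdisj : Disjoint A B := by
    rw [Set.disjoint_left]
    rintro x ⟨hxE, hxu⟩ ⟨_, hxv⟩
    have : x ∈ E ∩ (u ∩ v) := ⟨hxE, hxu, hxv⟩
    rw [hcon] at this
    exact this
  obtain ⟨δ₀, hδ₀, hgap⟩ := auxGap6 hAc hBc.isClosed hABdisj
  obtain ⟨n, hn⟩ := exists_pow_lt_of_lt_one (div_pos hδ₀ (by linarith : (0:ℝ) < D + 1)) hc1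
  have hnD : c ^ n * D < δ₀ := by
    have h5 : c ^ n * (D + 1) < δ₀ / (D + 1) * (D + 1) := by
      apply mul_lt_mul_of_pos_right hn (by linarith)
    rw [div_mul_cancel₀ _ (by linarith : (D:ℝ) + 1 ≠ 0)] at h5
    nlinarith [pow_nonneg hc0 n]
  have hchain := claim n a haE a' ha'E
  have hstay : ∀ y : V, Relation.ReflTransGen (S (c ^ n * D)) a y → y ∈ A := by
    intro y h
    induction h with
    | refl => exact ⟨haE, hau⟩
    | @tail y₁ y₂ h₁ h₂ ih =>
      obtain ⟨hy₁E, hy₂E, hdy⟩ := h₂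
      have hy₂AB : y₂ ∈ A ∪ B := by
        rcases hEuv hy₂E with h | h
        · exact Or.inl ⟨hy₂E, h⟩
        · exact Or.inr ⟨hy₂E, h⟩
      rcases hy₂AB with h | h
      · exact h
      · exact absurd (le_trans (hgap y₁ ih y₂ h) hdy) (not_le.mpr hnD)
  have ha'A : a' ∈ A := hstay a' hchain
  have : a' ∈ E ∩ (u ∩ v) := ⟨ha'E, ha'A.2, ha'v⟩
  rw [hcon] at this
  exact this
end

section
/- Let λ ∈ (−1,1), let T : ℝ² → ℝ² be the linear map T(x,y) = (λx + y, λy) (a 2×2 Jordan block with eigenvalue λ), let b = (0,1) (a cyclic vector for T), and let E be a nonempty compact subset of ℝ² with E = T(E) ∪ (T(E) + b). Then E is connected if and only if there exists f ∈ ℬ with f(λ) = f'(λ) = 0. -/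
open Filter Topology

namespace S7

/-- the two IFS maps, `i = false` is `T`, `i = true` is `T + b` -/
def fmap (l : ℝ) (i : Bool) (p : ℝ × ℝ) : ℝ × ℝ :=
  (l * p.1 + p.2, l * p.2 + (if i then 1 else 0))

/-- the linear part -/
def tmap (l : ℝ) (p : ℝ × ℝ) : ℝ × ℝ := (l * p.1 + p.2, l * p.2)

lemma fmap_eq (l : ℝ) (i : Bool) (p : ℝ × ℝ) :
    fmap l i p = tmap l p + (if i then (1:ℝ) else 0) • ((0:ℝ), (1:ℝ)) := by
  cases i <;> simp [fmap, tmap, Prod.ext_iff]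

lemma tmap_add (l : ℝ) (p q : ℝ × ℝ) : tmap l (p + q) = tmap l p + tmap l q := by
  simp only [tmap, Prod.ext_iff, Prod.fst_add, Prod.snd_add]
  constructor <;> ring

lemma tmap_smul (l c : ℝ) (p : ℝ × ℝ) : tmap l (c • p) = c • tmap l p := by
  simp only [tmap, Prod.ext_iff, Prod.smul_fst, Prod.smul_snd, smul_eq_mul, Prod.fst, Prod.snd]
  constructor <;> ring

lemma tmap_sub (l : ℝ) (p q : ℝ × ℝ) : tmap l (p - q) = tmap l p - tmap l q := by
  simp only [tmap, Prod.ext_iff, Prod.fst_sub, Prod.snd_sub]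
  constructor <;> ring

lemma fmap_sub (l : ℝ) (i : Bool) (p q : ℝ × ℝ) :
    fmap l i p - fmap l i q = tmap l (p - q) := by
  cases i <;>
  · simp only [fmap, tmap, Prod.ext_iff, Prod.fst_sub, Prod.snd_sub]
    constructor <;> ring

lemma iter_add (l : ℝ) (n : ℕ) (p q : ℝ × ℝ) :
    (tmap l)^[n] (p + q) = (tmap l)^[n] p + (tmap l)^[n] q := by
  induction n with
  | zero => simp
  | succ n ih => simp [Function.iterate_succ_apply', ih, tmap_add]

lemma iter_smul (l c : ℝ) (n : ℕ) (p : ℝ × ℝ) :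
    (tmap l)^[n] (c • p) = c • (tmap l)^[n] p := by
  induction n with
  | zero => simp
  | succ n ih => simp [Function.iterate_succ_apply', ih, tmap_smul]

lemma mul_pow_pred (l : ℝ) (n : ℕ) : l * ((n : ℝ) * l ^ (n - 1)) = (n : ℝ) * l ^ n := by
  cases n with
  | zero => simp
  | succ m => simp only [Nat.add_sub_cancel]; ring

lemma tmap_iter (l : ℝ) (n : ℕ) (x y : ℝ) :
    (tmap l)^[n] (x, y) = (l ^ n * x + (n : ℝ) * l ^ (n - 1) * y, l ^ n * y) := by
  induction n with
  | zero => simp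
  | succ n ih =>
    rw [Function.iterate_succ_apply', ih]
    simp only [tmap, Prod.ext_iff, Nat.add_sub_cancel]
    constructor
    · push_cast
      have h := mul_pow_pred l n
      linear_combination y * h
    · ring

/-- the `k`-th basis vector `T^k b` -/
lemma tmap_iter_b (l : ℝ) (n : ℕ) :
    (tmap l)^[n] ((0:ℝ), (1:ℝ)) = ((n : ℝ) * l ^ (n - 1), l ^ n) := by
  rw [tmap_iter]; simp

/-- norm bound for the iterates -/
def cnorm (l : ℝ) (n : ℕ) : ℝ := |l| ^ n + (n : ℝ) * |l| ^ (n - 1)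

lemma cnorm_nonneg (l : ℝ) (n : ℕ) : 0 ≤ cnorm l n := by
  have : (0:ℝ) ≤ |l| ^ n := pow_nonneg (abs_nonneg l) n
  have : (0:ℝ) ≤ (n : ℝ) * |l| ^ (n - 1) :=
    mul_nonneg (Nat.cast_nonneg n) (pow_nonneg (abs_nonneg l) _)
  unfold cnorm; positivity

lemma norm_iter_le (l : ℝ) (n : ℕ) (p : ℝ × ℝ) :
    ‖(tmap l)^[n] p‖ ≤ cnorm l n * ‖p‖ := by
  obtain ⟨x, y⟩ := p
  rw [tmap_iter]
  have hx : |x| ≤ ‖((x:ℝ), y)‖ := by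
    rw [Prod.norm_def]; simp [Real.norm_eq_abs, le_max_left]
  have hy : |y| ≤ ‖((x:ℝ), y)‖ := by
    rw [Prod.norm_def]; simp [Real.norm_eq_abs, le_max_right]
  have hn : (0:ℝ) ≤ ‖((x:ℝ), y)‖ := norm_nonneg _
  rw [Prod.norm_def]
  apply max_le
  · rw [Real.norm_eq_abs]
    calc |l ^ n * x + (n : ℝ) * l ^ (n - 1) * y|
        ≤ |l ^ n * x| + |(n : ℝ) * l ^ (n - 1) * y| := abs_add_le _ _
      _ ≤ |l| ^ n * ‖((x:ℝ), y)‖ + (n : ℝ) * |l| ^ (n - 1) * ‖((x:ℝ), y)‖ := by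
          rw [abs_mul, abs_mul, abs_pow, abs_mul, abs_pow, Nat.abs_cast]
          gcongr
      _ = cnorm l n * ‖((x:ℝ), y)‖ := by rw [cnorm]; ring
  · rw [Real.norm_eq_abs, abs_mul, abs_pow]
    calc |l| ^ n * |y| ≤ |l| ^ n * ‖((x:ℝ), y)‖ := by gcongr
      _ ≤ cnorm l n * ‖((x:ℝ), y)‖ := by
          apply mul_le_mul_of_nonneg_right _ hn
          unfold cnorm
          nlinarith [mul_nonneg (Nat.cast_nonneg (α := ℝ) n) (pow_nonneg (abs_nonneg l) (n-1))]

lemma cnorm_tendsto (l : ℝ) (hr : |l| < 1) :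
    Tendsto (cnorm l) atTop (nhds 0) := by
  have h0 : (0:ℝ) ≤ |l| := abs_nonneg l
  have h1 : Tendsto (fun n : ℕ => |l| ^ n) atTop (nhds 0) :=
    tendsto_pow_atTop_nhds_zero_of_lt_one h0 hr
  have hsum : Summable (fun n : ℕ => ((n:ℝ) + 1) * |l| ^ n) := by
    have := summable_pow_mul_geometric_of_norm_lt_one (R := ℝ) 1 (by rwa [Real.norm_eq_abs, abs_abs])
    simp only [pow_one] at this
    have hg : Summable (fun n : ℕ => |l| ^ n) := summable_geometric_of_lt_one h0 hr
    have := this.add hg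
    exact this.congr fun n => by ring
  have h2' : Tendsto (fun n : ℕ => ((n:ℝ) + 1) * |l| ^ n) atTop (nhds 0) :=
    hsum.tendsto_atTop_zero
  have h2 : Tendsto (fun n : ℕ => (n : ℝ) * |l| ^ (n - 1)) atTop (nhds 0) := by
    rw [← Filter.tendsto_add_atTop_iff_nat 1]
    have he : (fun n : ℕ => (((n+1:ℕ)) : ℝ) * |l| ^ ((n+1) - 1)) = fun n : ℕ => ((n:ℝ) + 1) * |l| ^ n := by
      funext n; push_cast [Nat.add_sub_cancel]; ring
    rw [he]
    exact h2'
  have := h1.add h2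
  rw [add_zero] at this
  exact this


section Summable

variable {l : ℝ}

lemma sumgeom (hr : |l| < 1) : Summable (fun n : ℕ => |l| ^ n) :=
  summable_geometric_of_lt_one (abs_nonneg l) hr

lemma sumngeom (hr : |l| < 1) : Summable (fun n : ℕ => (n : ℝ) * |l| ^ n) := by
  have := summable_pow_mul_geometric_of_norm_lt_one (R := ℝ) 1 (by rwa [Real.norm_eq_abs, abs_abs])
  simpa using this

lemma sumngeom' (hr : |l| < 1) : Summable (fun n : ℕ => (n : ℝ) * |l| ^ (n - 1)) := by
  apply (summable_nat_add_iff 1).mp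
  have he : (fun n : ℕ => (((n+1:ℕ)) : ℝ) * |l| ^ ((n+1) - 1)) = fun n : ℕ => ((n:ℝ) * |l| ^ n + |l| ^ n) := by
    funext n; push_cast [Nat.add_sub_cancel]; ring
  rw [he]
  exact (sumngeom hr).add (sumgeom hr)

variable {d : ℕ → ℝ}

lemma sum2 (hr : |l| < 1) (hd : ∀ n, |d n| ≤ 1) : Summable (fun n : ℕ => d n * l ^ n) := by
  apply Summable.of_norm_bounded (sumgeom hr)
  intro n
  rw [Real.norm_eq_abs, abs_mul, abs_pow]
  calc |d n| * |l| ^ n ≤ 1 * |l| ^ n := by gcongr; exact hd n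
    _ = |l| ^ n := one_mul _

lemma sum1 (hr : |l| < 1) (hd : ∀ n, |d n| ≤ 1) : Summable (fun n : ℕ => d n * ((n : ℝ) * l ^ (n - 1))) := by
  apply Summable.of_norm_bounded (sumngeom' hr)
  intro n
  rw [Real.norm_eq_abs, abs_mul, abs_mul, abs_pow, Nat.abs_cast]
  calc |d n| * ((n:ℝ) * |l| ^ (n-1)) ≤ 1 * ((n:ℝ) * |l| ^ (n-1)) :=
        mul_le_mul_of_nonneg_right (hd n) (by positivity)
    _ = (n:ℝ) * |l| ^ (n-1) := one_mul _

lemma sum3 (hr : |l| < 1) (hd : ∀ n, |d n| ≤ 1) : Summable (fun n : ℕ => d n * ((n : ℝ) * l ^ n)) := by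
  apply Summable.of_norm_bounded (sumngeom hr)
  intro n
  rw [Real.norm_eq_abs, abs_mul, abs_mul, abs_pow, Nat.abs_cast]
  calc |d n| * ((n:ℝ) * |l| ^ n) ≤ 1 * ((n:ℝ) * |l| ^ n) :=
        mul_le_mul_of_nonneg_right (hd n) (by positivity)
    _ = (n:ℝ) * |l| ^ n := one_mul _

end Summable

section Algebra

variable {l : ℝ} (hr : |l| < 1) {de dd a : ℕ → ℝ}
  (hde : ∀ n, |de n| ≤ 1) (hdd : ∀ n, |dd n| ≤ 1) (hab : ∀ n, |a n| ≤ 1)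
  (ha0 : a 0 = 1) (haa : ∀ n, a (n + 1) = dd n - de n)

lemma keymul (d : ℕ → ℝ) (hd : ∀ n, |d n| ≤ 1) :
    (∑' n : ℕ, d n * ((n:ℝ) * l ^ n)) = l * ∑' n : ℕ, d n * ((n:ℝ) * l ^ (n - 1)) := by
  rw [← tsum_mul_left]
  apply tsum_congr
  intro n
  linear_combination - d n * mul_pow_pred l n

include hr hde hdd hab ha0 haa

lemma alg1 :
    (∑' n : ℕ, a n * l ^ n)
      = 1 + (l * ∑' n : ℕ, dd n * l ^ n - l * ∑' n : ℕ, de n * l ^ n) := by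
  rw [Summable.tsum_eq_zero_add (sum2 hr hab)]
  have he : (fun n : ℕ => a (n+1) * l ^ (n+1))
      = fun n => l * (dd n * l ^ n) - l * (de n * l ^ n) := by
    funext n; rw [haa n]; ring
  rw [he, Summable.tsum_sub ((sum2 hr hdd).mul_left l) ((sum2 hr hde).mul_left l),
    tsum_mul_left, tsum_mul_left, ha0]
  norm_num

omit hab ha0 in
lemma alg2 :
    (∑' n : ℕ, ((n:ℝ) + 1) * a (n + 1) * l ^ n)
      = (l * ∑' n : ℕ, dd n * ((n:ℝ) * l ^ (n - 1)) + ∑' n : ℕ, dd n * l ^ n)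
        - (l * ∑' n : ℕ, de n * ((n:ℝ) * l ^ (n - 1)) + ∑' n : ℕ, de n * l ^ n) := by
  have he : (fun n : ℕ => ((n:ℝ) + 1) * a (n + 1) * l ^ n)
      = fun n => (dd n * ((n:ℝ) * l ^ n) + dd n * l ^ n)
          - (de n * ((n:ℝ) * l ^ n) + de n * l ^ n) := by
    funext n; rw [haa n]; ring
  rw [he, Summable.tsum_sub ((sum3 hr hdd).add (sum2 hr hdd)) ((sum3 hr hde).add (sum2 hr hde)),
    Summable.tsum_add (sum3 hr hdd) (sum2 hr hdd), Summable.tsum_add (sum3 hr hde) (sum2 hr hde),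
    keymul dd hdd, keymul de hde]

end Algebra


/-! ### addresses -/

/-- value of a boolean digit -/
def dv (i : Bool) : ℝ := if i then 1 else 0

lemma dv_bound (i : Bool) : |dv i| ≤ 1 := by cases i <;> simp [dv]

/-- `comp l ε e n = f_{ε 0} ∘ ⋯ ∘ f_{ε (n-1)} e` -/
def comp (l : ℝ) : (ℕ → Bool) → (ℝ × ℝ) → ℕ → ℝ × ℝ
  | _, e, 0 => e
  | ε, e, n + 1 => fmap l (ε 0) (comp l (fun k => ε (k + 1)) e n)

lemma comp_eq (l : ℝ) (e : ℝ × ℝ) : ∀ (n : ℕ) (ε : ℕ → Bool),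
    comp l ε e n =
      (∑ k ∈ Finset.range n, dv (ε k) • (tmap l)^[k] ((0:ℝ), (1:ℝ))) + (tmap l)^[n] e := by
  intro n
  induction n with
  | zero => intro ε; simp [comp]
  | succ n ih =>
    intro ε
    rw [comp, ih (fun k => ε (k + 1)), fmap_eq]
    have hmap : tmap l ((∑ k ∈ Finset.range n, dv (ε (k+1)) • (tmap l)^[k] ((0:ℝ), (1:ℝ)))
          + (tmap l)^[n] e)
        = (∑ k ∈ Finset.range n, dv (ε (k+1)) • (tmap l)^[k+1] ((0:ℝ), (1:ℝ)))
          + (tmap l)^[n+1] e := by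
      rw [tmap_add]
      congr 1
      · induction' (Finset.range n) using Finset.induction with j s hj ihs
        · simp [tmap]
        · rw [Finset.sum_insert hj, Finset.sum_insert hj, tmap_add, tmap_smul,
            ← Function.iterate_succ_apply' (tmap l) j, ihs]
      · rw [← Function.iterate_succ_apply' (tmap l) n]
    rw [hmap, Finset.sum_range_succ' (fun k => dv (ε k) • (tmap l)^[k] ((0:ℝ), (1:ℝ))) n]
    simp only [Function.iterate_zero_apply]
    abel

section WithE

variable {l : ℝ} {E : Set (ℝ × ℝ)}

/-- the limit point of an address -/
noncomputable def pt (l : ℝ) (d : ℕ → ℝ) : ℝ × ℝ :=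
  (∑' n : ℕ, d n * ((n:ℝ) * l ^ (n - 1)), ∑' n : ℕ, d n * l ^ n)

lemma partial_tendsto (hr : |l| < 1) (d : ℕ → ℝ) (hd : ∀ n, |d n| ≤ 1) :
    Filter.Tendsto (fun n => ∑ k ∈ Finset.range n, d k • (tmap l)^[k] ((0:ℝ), (1:ℝ)))
      Filter.atTop (nhds (pt l d)) := by
  have h1 : Filter.Tendsto (fun n => ∑ k ∈ Finset.range n, d k * ((k:ℝ) * l ^ (k-1)))
      Filter.atTop (nhds (pt l d).1) := ((sum1 hr hd).hasSum).tendsto_sum_nat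
  have h2 : Filter.Tendsto (fun n => ∑ k ∈ Finset.range n, d k * l ^ k)
      Filter.atTop (nhds (pt l d).2) := ((sum2 hr hd).hasSum).tendsto_sum_nat
  have he : (fun n => ∑ k ∈ Finset.range n, d k • (tmap l)^[k] ((0:ℝ), (1:ℝ)))
      = fun n => ((∑ k ∈ Finset.range n, d k * ((k:ℝ) * l ^ (k-1))),
          (∑ k ∈ Finset.range n, d k * l ^ k)) := by
    funext n
    rw [Prod.ext_iff]
    constructor
    · rw [Prod.fst_sum]
      apply Finset.sum_congr rfl
      intro k _
      rw [tmap_iter_b]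
      simp
    · rw [Prod.snd_sum]
      apply Finset.sum_congr rfl
      intro k _
      rw [tmap_iter_b]
      simp
  rw [he]
  exact h1.prodMk_nhds h2

variable (hsub : ∀ (i : Bool) (p : ℝ × ℝ), p ∈ E → fmap l i p ∈ E)

include hsub in
lemma comp_mem (e : ℝ × ℝ) (he : e ∈ E) : ∀ (n : ℕ) (ε : ℕ → Bool), comp l ε e n ∈ E := by
  intro n
  induction n with
  | zero => intro ε; exact he
  | succ n ih => intro ε; exact hsub _ _ (ih _)

include hsub in
/-- every address gives a point of `E` -/
lemma pt_mem (hr : |l| < 1) (hEc : IsCompact E) (hne : E.Nonempty)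
    (ε : ℕ → Bool) : pt l (fun n => dv (ε n)) ∈ E := by
  obtain ⟨e, he⟩ := hne
  obtain ⟨M, hM⟩ := isBounded_iff_forall_norm_le.mp hEc.isBounded
  have hcomp : ∀ n, comp l ε e n ∈ E := fun n => comp_mem hsub e he n ε
  have htend : Filter.Tendsto (fun n => comp l ε e n) Filter.atTop
      (nhds (pt l (fun n => dv (ε n)))) := by
    have h1 := partial_tendsto hr (fun n => dv (ε n)) (fun n => dv_bound (ε n))
    have h2 : Filter.Tendsto (fun n => (tmap l)^[n] e) Filter.atTop (nhds 0) := by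
      apply squeeze_zero_norm (fun n => norm_iter_le l n e)
      have := (cnorm_tendsto l hr).mul_const ‖e‖
      simpa using this
    have := h1.add h2
    rw [add_zero] at this
    convert this using 2 with n
    exact comp_eq l e n ε
  exact hEc.isClosed.mem_of_tendsto htend (Filter.Eventually.of_forall hcomp)

include hsub in
/-- every point of `E` has an address -/
lemma mem_pt (hr : |l| < 1) (hEc : IsCompact E)
    (hdec : ∀ p ∈ E, ∃ i : Bool, ∃ q ∈ E, p = fmap l i q)
    (p : ℝ × ℝ) (hp : p ∈ E) :
    ∃ ε : ℕ → Bool, p = pt l (fun n => dv (ε n)) := by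
  obtain ⟨M, hM⟩ := isBounded_iff_forall_norm_le.mp hEc.isBounded
  have hdec' : ∀ x : {q // q ∈ E}, ∃ y : Bool × {q // q ∈ E},
      (x : ℝ × ℝ) = fmap l y.1 (y.2 : ℝ × ℝ) := by
    rintro ⟨x, hx⟩
    obtain ⟨i, q, hq, hh⟩ := hdec x hx
    exact ⟨⟨i, ⟨q, hq⟩⟩, hh⟩
  choose F hF using hdec'
  let seq : ℕ → {q // q ∈ E} := fun n => Nat.rec ⟨p, hp⟩ (fun _ s => (F s).2) n
  have hseq : ∀ n : ℕ, seq (n + 1) = (F (seq n)).2 := fun n => rfl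
  let ε : ℕ → Bool := fun n => (F (seq n)).1
  have hstep : ∀ n : ℕ, (seq n).val
      = tmap l (seq (n + 1)).val + dv (ε n) • ((0:ℝ), (1:ℝ)) := by
    intro n
    rw [hseq n]
    have := hF (seq n)
    rw [this, fmap_eq]
    rfl
  have hinv : ∀ n : ℕ, p = (∑ k ∈ Finset.range n, dv (ε k) • (tmap l)^[k] ((0:ℝ),(1:ℝ)))
      + (tmap l)^[n] (seq n).val := by
    intro n
    induction n with
    | zero =>
      simp only [Finset.range_zero, Finset.sum_empty, Function.iterate_zero_apply, zero_add]
      rfl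
    | succ n ih =>
      calc p = (∑ k ∈ Finset.range n, dv (ε k) • (tmap l)^[k] ((0:ℝ),(1:ℝ)))
            + (tmap l)^[n] (seq n).val := ih
        _ = (∑ k ∈ Finset.range n, dv (ε k) • (tmap l)^[k] ((0:ℝ),(1:ℝ)))
            + ((tmap l)^[n+1] (seq (n+1)).val
              + dv (ε n) • (tmap l)^[n] ((0:ℝ),(1:ℝ))) := by
            rw [hstep n, iter_add, iter_smul, ← Function.iterate_succ_apply]
        _ = (∑ k ∈ Finset.range (n+1), dv (ε k) • (tmap l)^[k] ((0:ℝ),(1:ℝ)))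
            + (tmap l)^[n+1] (seq (n+1)).val := by
            rw [Finset.sum_range_succ]
            abel
  have htail : Filter.Tendsto (fun n => (tmap l)^[n] (seq n).val) Filter.atTop (nhds 0) := by
    apply squeeze_zero_norm
      (fun n => le_trans (norm_iter_le l n _)
        (mul_le_mul_of_nonneg_left (hM _ (seq n).2) (cnorm_nonneg l n)))
    simpa using (cnorm_tendsto l hr).mul_const M
  have hpart : Filter.Tendsto
      (fun n => ∑ k ∈ Finset.range n, dv (ε k) • (tmap l)^[k] ((0:ℝ),(1:ℝ)))
      Filter.atTop (nhds p) := by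
    have he : (fun n => ∑ k ∈ Finset.range n, dv (ε k) • (tmap l)^[k] ((0:ℝ),(1:ℝ)))
        = fun n => p - (tmap l)^[n] (seq n).val := by
      funext n
      rw [hinv n]
      abel
    rw [he]
    simpa using tendsto_const_nhds.sub htail
  exact ⟨ε, tendsto_nhds_unique hpart
    (partial_tendsto hr (fun n => dv (ε n)) (fun n => dv_bound (ε n)))⟩

end WithE

/-! ### pieces and chains -/

def pieceSet (l : ℝ) (E : Set (ℝ × ℝ)) : List Bool → Set (ℝ × ℝ)
  | [] => E
  | i :: L => fmap l i '' pieceSet l E L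

section Chains

variable {l : ℝ} {E : Set (ℝ × ℝ)}
  (hsub : ∀ (i : Bool) (p : ℝ × ℝ), p ∈ E → fmap l i p ∈ E)

include hsub in
lemma pieceSet_subset : ∀ L : List Bool, pieceSet l E L ⊆ E := by
  intro L
  induction L with
  | nil => exact subset_rfl
  | cons i L ih =>
    rintro x ⟨y, hy, rfl⟩
    exact hsub i y (ih hy)

lemma pieceSet_diff : ∀ (L : List Bool), ∀ x ∈ pieceSet l E L, ∀ y ∈ pieceSet l E L,
    ∃ x' ∈ E, ∃ y' ∈ E, x - y = (tmap l)^[L.length] (x' - y') := by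
  intro L
  induction L with
  | nil => exact fun x hx y hy => ⟨x, hx, y, hy, rfl⟩
  | cons i L ih =>
    rintro x ⟨a, ha, rfl⟩ y ⟨b, hb, rfl⟩
    obtain ⟨x', hx', y', hy', hd⟩ := ih a ha b hb
    exact ⟨x', hx', y', hy', by
      rw [fmap_sub, hd, List.length_cons, ← Function.iterate_succ_apply' (tmap l)]⟩

/-- an `n`-chain from `x` to `y` : consecutive points lie in a common level-`n` piece -/
def ChainN (l : ℝ) (E : Set (ℝ × ℝ)) (n : ℕ) (x y : ℝ × ℝ) : Prop :=
  ∃ m : ℕ, ∃ c : ℕ → ℝ × ℝ, c 0 = x ∧ c m = y ∧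
    ∀ k < m, ∃ L : List Bool, L.length = n ∧ c k ∈ pieceSet l E L ∧ c (k+1) ∈ pieceSet l E L

lemma ChainN.trans {n : ℕ} {x y z : ℝ × ℝ} (h1 : ChainN l E n x y) (h2 : ChainN l E n y z) :
    ChainN l E n x z := by
  obtain ⟨m1, c1, hc10, hc1m, hc1⟩ := h1
  obtain ⟨m2, c2, hc20, hc2m, hc2⟩ := h2
  set c : ℕ → ℝ × ℝ := fun k => if k < m1 then c1 k else c2 (k - m1) with hc
  have hagree : ∀ k, k ≤ m1 → c k = c1 k := by
    intro k hk
    rcases lt_or_eq_of_le hk with h | h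
    · simp [hc, h]
    · subst h
      simp [hc, hc20, hc1m]
  refine ⟨m1 + m2, c, ?_, ?_, ?_⟩
  · rw [hagree 0 (Nat.zero_le m1), hc10]
  · have hlt : ¬ (m1 + m2 < m1) := by omega
    simp only [hc, if_neg hlt, Nat.add_sub_cancel_left]
    exact hc2m
  · intro k hk
    by_cases h : k + 1 ≤ m1
    · have hk1 : k < m1 := h
      obtain ⟨L, hL, ha, hb⟩ := hc1 k hk1
      exact ⟨L, hL, by rwa [hagree k (le_of_lt hk1)], by rwa [hagree (k+1) h]⟩
    · have hm : m1 ≤ k := by omega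
      have hk2 : k - m1 < m2 := by omega
      obtain ⟨L, hL, ha, hb⟩ := hc2 (k - m1) hk2
      refine ⟨L, hL, ?_, ?_⟩
      · have hlt : ¬ k < m1 := by omega
        simpa only [hc, if_neg hlt] using ha
      · have hlt : ¬ k + 1 < m1 := by omega
        have he : k + 1 - m1 = (k - m1) + 1 := by omega
        simp only [hc, if_neg hlt, he]
        exact hb

include hsub in
lemma chain_exists
    (hcov : ∀ p ∈ E, p ∈ fmap l false '' E ∨ p ∈ fmap l true '' E)
    (hz : ∃ z, z ∈ fmap l false '' E ∧ z ∈ fmap l true '' E) :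
    ∀ n : ℕ, ∀ x ∈ E, ∀ y ∈ E, ChainN l E n x y := by
  intro n
  induction n with
  | zero =>
    intro x hx y hy
    refine ⟨1, fun k => if k = 0 then x else y, by simp, by simp, ?_⟩
    intro k hk
    interval_cases k
    exact ⟨[], rfl, by simpa [pieceSet] using hx, by simpa [pieceSet] using hy⟩
  | succ n ih =>
    obtain ⟨z, hz0, hz1⟩ := hz
    have hstep : ∀ (i : Bool), ∀ x ∈ fmap l i '' E, ∀ y ∈ fmap l i '' E,
        ChainN l E (n+1) x y := by
      rintro i x ⟨x', hx', rfl⟩ y ⟨y', hy', rfl⟩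
      obtain ⟨m, c, hc0, hcm, hcs⟩ := ih x' hx' y' hy'
      refine ⟨m, fun k => fmap l i (c k), by simp [hc0], by simp [hcm], ?_⟩
      intro k hk
      obtain ⟨L, hL, ha, hb⟩ := hcs k hk
      exact ⟨i :: L, by simp [hL], Set.mem_image_of_mem _ ha, Set.mem_image_of_mem _ hb⟩
    intro x hx y hy
    rcases hcov x hx with hx' | hx' <;> rcases hcov y hy with hy' | hy'
    · exact hstep false x hx' y hy'
    · exact (hstep false x hx' z hz0).trans (hstep true z hz1 y hy')
    · exact (hstep true x hx' z hz1).trans (hstep false z hz0 y hy')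
    · exact hstep true x hx' y hy'

include hsub in
/-- if the two first-level pieces meet, any two points are joined by arbitrarily fine chains;
hence `E` is preconnected. -/
lemma preconnected_of_meet (hr : |l| < 1) (hEc : IsCompact E)
    (hcov : ∀ p ∈ E, p ∈ fmap l false '' E ∨ p ∈ fmap l true '' E)
    (hz : ∃ z, z ∈ fmap l false '' E ∧ z ∈ fmap l true '' E) :
    IsPreconnected E := by
  obtain ⟨M, hM⟩ := isBounded_iff_forall_norm_le.mp hEc.isBounded
  intro U V hU hV hUV hEU hEV
  by_contra hcon
  rw [Set.not_nonempty_iff_eq_empty] at hcon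
  obtain ⟨u, huE, huU⟩ := hEU
  obtain ⟨v, hvE, hvV⟩ := hEV
  set A : Set (ℝ × ℝ) := E \ V with hA
  set B : Set (ℝ × ℝ) := E \ U with hB
  have hdisj : ∀ x, x ∈ A → x ∈ B → False := by
    rintro x ⟨hxE, hxV⟩ ⟨_, hxU⟩
    rcases hUV hxE with h | h
    exacts [hxU h, hxV h]
  have hcover : ∀ x ∈ E, x ∈ A ∨ x ∈ B := by
    intro x hxE
    rcases hUV hxE with h | h
    · left
      refine ⟨hxE, fun hxV => ?_⟩
      have : x ∈ E ∩ (U ∩ V) := ⟨hxE, h, hxV⟩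
      rw [hcon] at this
      exact this
    · right
      refine ⟨hxE, fun hxU => ?_⟩
      have : x ∈ E ∩ (U ∩ V) := ⟨hxE, hxU, h⟩
      rw [hcon] at this
      exact this
  have hAc : IsCompact A := hEc.of_isClosed_subset (hEc.isClosed.sdiff hV) Set.diff_subset
  have hBc : IsCompact B := hEc.of_isClosed_subset (hEc.isClosed.sdiff hU) Set.diff_subset
  have huA : u ∈ A := by
    refine ⟨huE, fun huV => ?_⟩
    have : u ∈ E ∩ (U ∩ V) := ⟨huE, huU, huV⟩
    rw [hcon] at this
    exact this
  have hvB : v ∈ B := by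
    refine ⟨hvE, fun hvU => ?_⟩
    have : v ∈ E ∩ (U ∩ V) := ⟨hvE, hvU, hvV⟩
    rw [hcon] at this
    exact this
  -- minimal distance between A and B
  obtain ⟨⟨a0, b0⟩, hab, hmin⟩ := (hAc.prod hBc).exists_isMinOn ⟨(u, v), huA, hvB⟩
    (continuous_dist.continuousOn)
  have hd0 : 0 < dist a0 b0 := by
    rw [dist_pos]
    rintro rfl
    exact hdisj a0 hab.1 hab.2
  -- choose a level with small pieces
  have htD : Filter.Tendsto (fun n => cnorm l n * (2 * M)) Filter.atTop (nhds 0) := by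
    simpa using (cnorm_tendsto l hr).mul_const (2 * M)
  obtain ⟨n, hn⟩ := (htD.eventually (gt_mem_nhds hd0)).exists
  -- get a fine chain from u to v
  obtain ⟨m, c, hc0, hcm, hcs⟩ := chain_exists hsub hcov hz n u huE v hvE
  have hcE : ∀ k ≤ m, c k ∈ E := by
    intro k hk
    cases k with
    | zero => rw [hc0]; exact huE
    | succ j =>
      obtain ⟨L, hL, _, hb⟩ := hcs j (by omega)
      exact pieceSet_subset hsub L hb
  -- find a crossing step
  have hcross : ∀ (m : ℕ) (c : ℕ → ℝ × ℝ), (∀ k ≤ m, c k ∈ A ∨ c k ∈ B) →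
      c 0 ∈ A → c m ∈ B → ∃ k < m, c k ∈ A ∧ c (k+1) ∈ B := by
    intro m
    induction m with
    | zero =>
      intro c _ h0 hm
      exact (hdisj _ h0 hm).elim
    | succ m ihm =>
      intro c hmem h0 hm
      rcases hmem 1 (by omega) with h1 | h1
      · obtain ⟨k, hk, hka, hkb⟩ := ihm (fun j => c (j+1)) (fun j hj => hmem (j+1) (by omega)) h1 hm
        exact ⟨k+1, by omega, hka, hkb⟩
      · exact ⟨0, by omega, h0, h1⟩
  obtain ⟨k, hk, hka, hkb⟩ := hcross m c (fun k hk => hcover _ (hcE k hk)) (hc0 ▸ huA) (hcm ▸ hvB)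
  -- the crossing step is short
  obtain ⟨L, hL, ha, hb⟩ := hcs k hk
  obtain ⟨x', hx', y', hy', hdd⟩ := pieceSet_diff L (c k) ha (c (k+1)) hb
  have hshort : dist (c k) (c (k+1)) ≤ cnorm l n * (2 * M) := by
    rw [dist_eq_norm, hdd, hL]
    calc ‖(tmap l)^[n] (x' - y')‖ ≤ cnorm l n * ‖x' - y'‖ := norm_iter_le l n _
      _ ≤ cnorm l n * (2 * M) := by
          apply mul_le_mul_of_nonneg_left _ (cnorm_nonneg l n)
          calc ‖x' - y'‖ ≤ ‖x'‖ + ‖y'‖ := norm_sub_le _ _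
            _ ≤ M + M := add_le_add (hM _ hx') (hM _ hy')
            _ = 2 * M := by ring
  have hlong : dist a0 b0 ≤ dist (c k) (c (k+1)) :=
    hmin (Set.mk_mem_prod hka hkb)
  linarith

end Chains

end S7

/-- `x` is a double zero of a power series `1 + ∑ aₙ xⁿ` with coefficients in `{-1,0,1}`:
the series and its termwise derivative both vanish at `x`. -/
def IsDoubleZero (x : ℝ) : Prop :=
  ∃ a : ℕ → ℝ, a 0 = 1 ∧ (∀ n, a n = -1 ∨ a n = 0 ∨ a n = 1) ∧
    (∑' n : ℕ, a n * x ^ n) = 0 ∧ (∑' n : ℕ, ((n : ℝ) + 1) * a (n + 1) * x ^ n) = 0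

open S7 in
theorem stmt7 (l : ℝ) (hl : l ∈ Set.Ioo (-1 : ℝ) 1)
    (E : Set (ℝ × ℝ)) (hEc : IsCompact E) (hEne : E.Nonempty)
    (hE : E = (fun p : ℝ × ℝ => (l * p.1 + p.2, l * p.2)) '' E ∪
        (fun p : ℝ × ℝ => (l * p.1 + p.2, l * p.2 + 1)) '' E) :
    IsConnected E ↔ IsDoubleZero l := by
  have hr : |l| < 1 := abs_lt.mpr ⟨hl.1, hl.2⟩
  have hsub : ∀ (i : Bool) (p : ℝ × ℝ), p ∈ E → fmap l i p ∈ E := by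
    intro i p hp
    have h : fmap l i p ∈ (fun p : ℝ × ℝ => (l * p.1 + p.2, l * p.2)) '' E ∪
        (fun p : ℝ × ℝ => (l * p.1 + p.2, l * p.2 + 1)) '' E := by
      cases i
      · exact Or.inl ⟨p, hp, by simp [fmap]⟩
      · exact Or.inr ⟨p, hp, by simp [fmap]⟩
    rwa [← hE] at h
  have hcov : ∀ p ∈ E, p ∈ fmap l false '' E ∨ p ∈ fmap l true '' E := by
    intro p hp
    rw [hE] at hp
    rcases hp with ⟨q, hq, hh⟩ | ⟨q, hq, hh⟩
    · exact Or.inl ⟨q, hq, by simp only [fmap, Bool.false_eq_true, if_false, add_zero]; exact hh⟩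
    · exact Or.inr ⟨q, hq, by simp only [fmap, if_true]; exact hh⟩
  have hdec : ∀ p ∈ E, ∃ i : Bool, ∃ q ∈ E, p = fmap l i q := by
    intro p hp
    rcases hcov p hp with ⟨q, hq, hh⟩ | ⟨q, hq, hh⟩
    exacts [⟨false, q, hq, hh.symm⟩, ⟨true, q, hq, hh.symm⟩]
  constructor
  · -- connected → double zero
    intro hconn
    set A : Set (ℝ × ℝ) := (fun p : ℝ × ℝ => (l * p.1 + p.2, l * p.2)) '' E with hA
    set B : Set (ℝ × ℝ) := (fun p : ℝ × ℝ => (l * p.1 + p.2, l * p.2 + 1)) '' E with hB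
    have hAE : A ⊆ E := by
      rintro x ⟨p, hp, rfl⟩
      have := hsub false p hp
      simpa [fmap] using this
    have hBE : B ⊆ E := by
      rintro x ⟨p, hp, rfl⟩
      have := hsub true p hp
      simpa [fmap] using this
    have hAc : IsClosed A := (hEc.image (by fun_prop)).isClosed
    have hBc : IsClosed B := (hEc.image (by fun_prop)).isClosed
    obtain ⟨e, he⟩ := hEne
    have hmeet : (E ∩ (A ∩ B)).Nonempty := by
      apply isPreconnected_closed_iff.mp hconn.isPreconnected A B hAc hBc (le_of_eq hE)
      · exact ⟨(l * e.1 + e.2, l * e.2), hAE ⟨e, he, rfl⟩, ⟨e, he, rfl⟩⟩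
      · exact ⟨(l * e.1 + e.2, l * e.2 + 1), hBE ⟨e, he, rfl⟩, ⟨e, he, rfl⟩⟩
    obtain ⟨z, _, ⟨p, hpE, hp⟩, ⟨q, hqE, hq⟩⟩ := hmeet
    have h12 := hp.trans hq.symm
    simp only [Prod.mk.injEq] at h12
    obtain ⟨e1, e2⟩ := h12
    obtain ⟨ε, hpeq⟩ := mem_pt hsub hr hEc hdec p hpE
    obtain ⟨δ, hqeq⟩ := mem_pt hsub hr hEc hdec q hqE
    have hp1 : p.1 = ∑' n : ℕ, dv (ε n) * ((n : ℝ) * l ^ (n - 1)) := by rw [hpeq]; rfl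
    have hp2 : p.2 = ∑' n : ℕ, dv (ε n) * l ^ n := by rw [hpeq]; rfl
    have hq1 : q.1 = ∑' n : ℕ, dv (δ n) * ((n : ℝ) * l ^ (n - 1)) := by rw [hqeq]; rfl
    have hq2 : q.2 = ∑' n : ℕ, dv (δ n) * l ^ n := by rw [hqeq]; rfl
    refine ⟨fun n => Nat.rec (motive := fun _ => ℝ) 1 (fun m _ => dv (δ m) - dv (ε m)) n,
      rfl, ?_, ?_, ?_⟩
    · intro n
      cases n with
      | zero => right; right; rfl
      | succ m =>
        rcases Bool.eq_false_or_eq_true (ε m) with he | he <;>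
          rcases Bool.eq_false_or_eq_true (δ m) with hd | hd <;>
            simp [dv, he, hd]
    · rw [alg1 hr (de := fun n => dv (ε n)) (dd := fun n => dv (δ n))
        (fun n => dv_bound (ε n)) (fun n => dv_bound (δ n)) ?hab rfl (fun n => rfl)]
      case hab =>
        intro n
        cases n with
        | zero => norm_num
        | succ m =>
        rcases Bool.eq_false_or_eq_true (ε m) with he | he <;>
          rcases Bool.eq_false_or_eq_true (δ m) with hd | hd <;>
            simp [dv, he, hd] <;> norm_num
      rw [← hp2, ← hq2]
      linarith [e2]
    · rw [alg2 hr (de := fun n => dv (ε n)) (dd := fun n => dv (δ n))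
        (fun n => dv_bound (ε n)) (fun n => dv_bound (δ n)) (fun n => rfl)]
      rw [← hp1, ← hp2, ← hq1, ← hq2]
      linarith [e1]
  · -- double zero → connected
    rintro ⟨a, ha0, hav, h1, h2⟩
    classical
    set εb : ℕ → Bool := fun n => decide (a (n + 1) = -1) with hεb
    set δb : ℕ → Bool := fun n => decide (a (n + 1) = 1) with hδb
    have hdiff : ∀ n, a (n + 1) = dv (δb n) - dv (εb n) := by
      intro n
      rcases hav (n + 1) with h | h | h <;>
        simp [dv, hεb, hδb, h] <;> norm_num
    have hab : ∀ n, |a n| ≤ 1 := by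
      intro n
      rcases hav n with h | h | h <;> rw [h] <;> norm_num
    set p := pt l (fun n => dv (εb n)) with hpdef
    set q := pt l (fun n => dv (δb n)) with hqdef
    have hpE : p ∈ E := pt_mem hsub hr hEc hEne εb
    have hqE : q ∈ E := pt_mem hsub hr hEc hEne δb
    have hp1 : p.1 = ∑' n : ℕ, dv (εb n) * ((n : ℝ) * l ^ (n - 1)) := rfl
    have hp2 : p.2 = ∑' n : ℕ, dv (εb n) * l ^ n := rfl
    have hq1 : q.1 = ∑' n : ℕ, dv (δb n) * ((n : ℝ) * l ^ (n - 1)) := rfl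
    have hq2 : q.2 = ∑' n : ℕ, dv (δb n) * l ^ n := rfl
    have h1' : (1 : ℝ) + (l * q.2 - l * p.2) = 0 := by
      rw [hq2, hp2]
      rw [← alg1 hr (fun n => dv_bound (εb n)) (fun n => dv_bound (δb n)) hab ha0 hdiff]
      exact h1
    have h2' : (l * q.1 + q.2) - (l * p.1 + p.2) = 0 := by
      rw [hq1, hq2, hp1, hp2]
      rw [← alg2 hr (fun n => dv_bound (εb n)) (fun n => dv_bound (δb n)) hdiff]
      exact h2
    have hz : ∃ z, z ∈ fmap l false '' E ∧ z ∈ fmap l true '' E := by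
      refine ⟨fmap l false p, ⟨p, hpE, rfl⟩, ⟨q, hqE, ?_⟩⟩
      simp only [fmap, Prod.mk.injEq, if_true, Bool.false_eq_true, if_false]
      constructor
      · linarith [h2', h1']
      · linarith [h1']
    exact ⟨hEne, preconnected_of_meet hsub hr hEc hcov hz⟩
end

section
/- Let γ, λ ∈ (−1,1) with γ ≠ λ, let T : ℝ² → ℝ² be the diagonal linear map T(x,y) = (γx, λy), let b = (1,1) (a cyclic vector for T), and let E be a nonempty compact subset of ℝ² with E = T(E) ∪ (T(E) + b). Then E is connected if and only if there exists f ∈ ℬ with f(γ) = f(λ) = 0. -/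
namespace Stmt8Aux

noncomputable def Fm (g l : ℝ) (i : Bool) (p : ℝ × ℝ) : ℝ × ℝ :=
  (g * p.1 + (if i then 1 else 0), l * p.2 + (if i then 1 else 0))

noncomputable def dR (d : ℕ → Bool) (n : ℕ) : ℝ := if d n then 1 else 0

lemma dR_abs (d : ℕ → Bool) (n : ℕ) : |dR d n| ≤ 1 := by
  unfold dR; split <;> simp

noncomputable def phi (g l : ℝ) (d : ℕ → Bool) : ℝ × ℝ :=
  (∑' n, dR d n * g ^ n, ∑' n, dR d n * l ^ n)

lemma summable_aux {b : ℕ → ℝ} (hb : ∀ n, |b n| ≤ 1) {x : ℝ} (hx : |x| < 1) :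
    Summable (fun n => b n * x ^ n) := by
  apply Summable.of_norm_bounded (summable_geometric_of_lt_one (abs_nonneg x) hx)
  intro n
  rw [Real.norm_eq_abs, abs_mul, abs_pow]
  calc |b n| * |x| ^ n ≤ 1 * |x| ^ n := by
        gcongr; exact hb n
    _ = |x| ^ n := one_mul _

lemma tsum_shift {b : ℕ → ℝ} (hb : ∀ n, |b n| ≤ 1) {x : ℝ} (hx : |x| < 1) :
    ∑' n, b n * x ^ n = b 0 + x * ∑' n, b (n + 1) * x ^ n := by
  have hs : Summable (fun n => b n * x ^ n) := summable_aux hb hx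
  rw [Summable.tsum_eq_zero_add hs]
  congr 1
  · simp
  · rw [← tsum_mul_left]
    congr 1 with n
    ring

lemma tsum_bound {b : ℕ → ℝ} (hb : ∀ n, |b n| ≤ 1) {x : ℝ} (hx : |x| < 1) :
    |∑' n, b n * x ^ n| ≤ (1 - |x|)⁻¹ := by
  have hg : HasSum (fun n : ℕ => |x| ^ n) (1 - |x|)⁻¹ :=
    hasSum_geometric_of_lt_one (abs_nonneg x) hx
  have := tsum_of_norm_bounded hg (f := fun n => b n * x ^ n) ?_
  · simpa using this
  · intro n
    rw [Real.norm_eq_abs, abs_mul, abs_pow]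
    calc |b n| * |x| ^ n ≤ 1 * |x| ^ n := by gcongr; exact hb n
      _ = |x| ^ n := one_mul _

lemma phi_rec {g l : ℝ} (hg : |g| < 1) (hl : |l| < 1) (d : ℕ → Bool) :
    phi g l d = Fm g l (d 0) (phi g l (fun n => d (n + 1))) := by
  have h1 := tsum_shift (fun n => dR_abs d n) hg
  have h2 := tsum_shift (fun n => dR_abs d n) hl
  unfold phi Fm
  simp only [dR] at h1 h2 ⊢
  ext
  · simp only
    rw [h1]; ring
  · simp only
    rw [h2]; ring

lemma Fm_lip {g l : ℝ} (i : Bool) (p q : ℝ × ℝ) :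
    dist (Fm g l i p) (Fm g l i q) ≤ max |g| |l| * dist p q := by
  have hd1 : dist p.1 q.1 ≤ dist p q := by rw [Prod.dist_eq]; exact le_max_left _ _
  have hd2 : dist p.2 q.2 ≤ dist p q := by rw [Prod.dist_eq]; exact le_max_right _ _
  have hc : |g| ≤ max |g| |l| := le_max_left _ _
  have hc' : |l| ≤ max |g| |l| := le_max_right _ _
  rw [Prod.dist_eq]
  apply max_le
  · show dist (g * p.1 + _) (g * q.1 + _) ≤ _
    rw [Real.dist_eq]
    have he : g * p.1 + (if i then (1:ℝ) else 0) - (g * q.1 + (if i then 1 else 0)) = g * (p.1 - q.1) := by ring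
    rw [he, abs_mul]
    exact mul_le_mul hc (by rw [Real.dist_eq] at hd1; exact hd1) (abs_nonneg _) (le_trans (abs_nonneg _) hc)
  · show dist (l * p.2 + _) (l * q.2 + _) ≤ _
    rw [Real.dist_eq]
    have he : l * p.2 + (if i then (1:ℝ) else 0) - (l * q.2 + (if i then 1 else 0)) = l * (p.2 - q.2) := by ring
    rw [he, abs_mul]
    exact mul_le_mul hc' (by rw [Real.dist_eq] at hd2; exact hd2) (abs_nonneg _) (le_trans (abs_nonneg _) hc)

noncomputable def itF (g l : ℝ) (x0 : ℝ × ℝ) : ℕ → (ℕ → Bool) → ℝ × ℝ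
  | 0, _ => x0
  | (k+1), d => Fm g l (d 0) (itF g l x0 k (fun n => d (n+1)))

lemma phi_norm {g l : ℝ} (hg : |g| < 1) (hl : |l| < 1) (d : ℕ → Bool) :
    ‖phi g l d‖ ≤ (1 - max |g| |l|)⁻¹ := by
  have hc : max |g| |l| < 1 := max_lt hg hl
  have hpos : 0 < 1 - max |g| |l| := by linarith
  have h1 : |∑' n, dR d n * g ^ n| ≤ (1 - max |g| |l|)⁻¹ :=
    le_trans (tsum_bound (dR_abs d) hg) (by
      apply inv_anti₀ hpos
      have := le_max_left |g| |l|; linarith)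
  have h2 : |∑' n, dR d n * l ^ n| ≤ (1 - max |g| |l|)⁻¹ :=
    le_trans (tsum_bound (dR_abs d) hl) (by
      apply inv_anti₀ hpos
      have := le_max_right |g| |l|; linarith)
  rw [phi, Prod.norm_def]
  exact max_le h1 h2

section Main

variable {g l : ℝ} {E : Set (ℝ × ℝ)}

lemma Fm_mem (hE : E = Fm g l false '' E ∪ Fm g l true '' E) (i : Bool) {x : ℝ × ℝ}
    (hx : x ∈ E) : Fm g l i x ∈ E := by
  rw [hE]
  cases i
  · exact Or.inl ⟨x, hx, rfl⟩
  · exact Or.inr ⟨x, hx, rfl⟩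

lemma dist_bound (hg : |g| < 1) (hl : |l| < 1) {R : ℝ} (hR : ∀ x ∈ E, ‖x‖ ≤ R)
    {x : ℝ × ℝ} (hx : x ∈ E) (d : ℕ → Bool) :
    dist x (phi g l d) ≤ R + (1 - max |g| |l|)⁻¹ := by
  rw [dist_eq_norm]
  calc ‖x - phi g l d‖ ≤ ‖x‖ + ‖phi g l d‖ := norm_sub_le _ _
    _ ≤ R + (1 - max |g| |l|)⁻¹ := add_le_add (hR x hx) (phi_norm hg hl d)

lemma itF_mem (hE : E = Fm g l false '' E ∪ Fm g l true '' E) {x0 : ℝ × ℝ} (hx0 : x0 ∈ E) :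
    ∀ (k : ℕ) (d : ℕ → Bool), itF g l x0 k d ∈ E := by
  intro k
  induction k with
  | zero => intro d; exact hx0
  | succ k ih => intro d; exact Fm_mem hE _ (ih _)

lemma itF_dist (hg : |g| < 1) (hl : |l| < 1) {R : ℝ} (hR : ∀ x ∈ E, ‖x‖ ≤ R)
    (hE : E = Fm g l false '' E ∪ Fm g l true '' E) {x0 : ℝ × ℝ} (hx0 : x0 ∈ E) :
    ∀ (k : ℕ) (d : ℕ → Bool),
      dist (itF g l x0 k d) (phi g l d) ≤ (max |g| |l|) ^ k * (R + (1 - max |g| |l|)⁻¹) := by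
  intro k
  induction k with
  | zero =>
      intro d
      simpa [itF] using dist_bound hg hl hR hx0 d
  | succ k ih =>
      intro d
      have hrec := phi_rec hg hl d
      calc dist (itF g l x0 (k+1) d) (phi g l d)
          = dist (Fm g l (d 0) (itF g l x0 k (fun n => d (n+1))))
              (Fm g l (d 0) (phi g l (fun n => d (n+1)))) := by rw [hrec]; rfl
        _ ≤ max |g| |l| * dist (itF g l x0 k (fun n => d (n+1))) (phi g l (fun n => d (n+1))) :=
            Fm_lip _ _ _
        _ ≤ max |g| |l| * ((max |g| |l|) ^ k * (R + (1 - max |g| |l|)⁻¹)) := by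
            apply mul_le_mul_of_nonneg_left (ih _) (le_trans (abs_nonneg g) (le_max_left _ _))
        _ = (max |g| |l|) ^ (k+1) * (R + (1 - max |g| |l|)⁻¹) := by ring

lemma phi_mem (hg : |g| < 1) (hl : |l| < 1) (hEc : IsCompact E) (hEne : E.Nonempty)
    (hE : E = Fm g l false '' E ∪ Fm g l true '' E) (d : ℕ → Bool) :
    phi g l d ∈ E := by
  obtain ⟨R, hR⟩ := hEc.isBounded.exists_norm_le
  obtain ⟨x0, hx0⟩ := hEne
  have hc : max |g| |l| < 1 := max_lt hg hl
  have hc0 : 0 ≤ max |g| |l| := le_trans (abs_nonneg g) (le_max_left _ _)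
  have hb := itF_dist hg hl hR hE hx0
  have h0 : Filter.Tendsto (fun k : ℕ => (max |g| |l|) ^ k * (R + (1 - max |g| |l|)⁻¹))
      Filter.atTop (nhds 0) := by
    have := (tendsto_pow_atTop_nhds_zero_of_lt_one hc0 hc).mul_const (R + (1 - max |g| |l|)⁻¹)
    simpa using this
  have htend : Filter.Tendsto (fun k => itF g l x0 k d) Filter.atTop (nhds (phi g l d)) := by
    rw [tendsto_iff_dist_tendsto_zero]
    exact squeeze_zero (fun k => dist_nonneg) (fun k => hb k d) h0
  exact hEc.isClosed.mem_of_tendsto htend (Filter.Eventually.of_forall fun k => itF_mem hE hx0 k d)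

lemma mem_range_phi (hg : |g| < 1) (hl : |l| < 1) (hEc : IsCompact E)
    (hE : E = Fm g l false '' E ∪ Fm g l true '' E) {x : ℝ × ℝ} (hx : x ∈ E) :
    ∃ d : ℕ → Bool, x = phi g l d := by
  obtain ⟨R, hR⟩ := hEc.isBounded.exists_norm_le
  have hc : max |g| |l| < 1 := max_lt hg hl
  have hc0 : 0 ≤ max |g| |l| := le_trans (abs_nonneg g) (le_max_left _ _)
  have hstep : ∀ y : {z // z ∈ E}, ∃ p : Bool × {z // z ∈ E}, (y : ℝ × ℝ) = Fm g l p.1 p.2 := by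
    rintro ⟨y, hy⟩
    rw [hE] at hy
    rcases hy with ⟨z, hz, hzy⟩ | ⟨z, hz, hzy⟩
    · exact ⟨(false, ⟨z, hz⟩), hzy.symm⟩
    · exact ⟨(true, ⟨z, hz⟩), hzy.symm⟩
  choose nxt hnxt using hstep
  set seq : ℕ → {z // z ∈ E} := fun n => ((fun y => (nxt y).2)^[n]) ⟨x, hx⟩ with hseq
  set d : ℕ → Bool := fun n => (nxt (seq n)).1 with hd
  have hseqsucc : ∀ n, seq (n+1) = (nxt (seq n)).2 := by
    intro n
    rw [hseq]
    exact Function.iterate_succ_apply' _ _ _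
  have hrel : ∀ n, (seq n : ℝ × ℝ) = Fm g l (d n) (seq (n+1)) := by
    intro n
    rw [hseqsucc n, hd]
    exact hnxt (seq n)
  have key : ∀ (k n : ℕ),
      dist (seq n : ℝ × ℝ) (phi g l (fun m => d (m + n)))
        ≤ (max |g| |l|) ^ k * (R + (1 - max |g| |l|)⁻¹) := by
    intro k
    induction k with
    | zero =>
        intro n
        simpa using dist_bound hg hl hR (seq n).2 _
    | succ k ih =>
        intro n
        have hrec := phi_rec hg hl (fun m => d (m + n))
        have hshift : (fun m => (fun m' => d (m' + n)) (m + 1)) = fun m => d (m + (n+1)) := by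
          funext m
          show d (m + 1 + n) = d (m + (n + 1))
          congr 1
          omega
        rw [hrec] at *
        have hd0 : (fun m => d (m + n)) 0 = d n := by simp
        calc dist (seq n : ℝ × ℝ)
              (Fm g l ((fun m => d (m + n)) 0) (phi g l (fun m => (fun m' => d (m' + n)) (m + 1))))
            = dist (Fm g l (d n) (seq (n+1) : ℝ × ℝ))
                (Fm g l (d n) (phi g l (fun m => d (m + (n+1))))) := by
              rw [← hrel n, hd0, hshift]
          _ ≤ max |g| |l| * dist (seq (n+1) : ℝ × ℝ) (phi g l (fun m => d (m + (n+1)))) :=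
              Fm_lip _ _ _
          _ ≤ max |g| |l| * ((max |g| |l|) ^ k * (R + (1 - max |g| |l|)⁻¹)) :=
              mul_le_mul_of_nonneg_left (ih (n+1)) hc0
          _ = (max |g| |l|) ^ (k+1) * (R + (1 - max |g| |l|)⁻¹) := by ring
  refine ⟨d, ?_⟩
  have hzero : dist x (phi g l d) ≤ 0 := by
    have h0 : Filter.Tendsto (fun k : ℕ => (max |g| |l|) ^ k * (R + (1 - max |g| |l|)⁻¹))
        Filter.atTop (nhds 0) := by
      have := (tendsto_pow_atTop_nhds_zero_of_lt_one hc0 hc).mul_const (R + (1 - max |g| |l|)⁻¹)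
      simpa using this
    refine ge_of_tendsto h0 (Filter.Eventually.of_forall fun k => ?_)
    have := key k 0
    simpa [hseq] using this
  have := le_antisymm hzero dist_nonneg
  exact (dist_eq_zero.mp this)

end Main

section Chains

def ChainP (E : Set (ℝ × ℝ)) (ε : ℝ) (x y : ℝ × ℝ) : Prop :=
  ∃ k, ∃ z : ℕ → ℝ × ℝ, z 0 = x ∧ z k = y ∧ (∀ i ≤ k, z i ∈ E) ∧
    ∀ i < k, dist (z (i + 1)) (z i) ≤ ε

lemma chain_single {E : Set (ℝ × ℝ)} {ε : ℝ} {x y : ℝ × ℝ} (hx : x ∈ E) (hy : y ∈ E)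
    (h : dist y x ≤ ε) : ChainP E ε x y := by
  refine ⟨1, fun i => if i = 0 then x else y, by simp, by simp, ?_, ?_⟩
  · intro i _
    by_cases hi : i = 0 <;> simp [hi, hx, hy]
  · intro i hi
    interval_cases i
    simpa using h

lemma chain_mono {E : Set (ℝ × ℝ)} {ε ε' : ℝ} {x y : ℝ × ℝ} (h : ChainP E ε x y)
    (hee : ε ≤ ε') : ChainP E ε' x y := by
  obtain ⟨k, z, h0, hk, hm, hs⟩ := h
  exact ⟨k, z, h0, hk, hm, fun i hi => le_trans (hs i hi) hee⟩

lemma chain_concat {E : Set (ℝ × ℝ)} {ε : ℝ} {x w y : ℝ × ℝ}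
    (h1 : ChainP E ε x w) (h2 : ChainP E ε w y) : ChainP E ε x y := by
  obtain ⟨k1, z1, h10, h1k, h1m, h1s⟩ := h1
  obtain ⟨k2, z2, h20, h2k, h2m, h2s⟩ := h2
  refine ⟨k1 + k2, fun i => if i < k1 then z1 i else z2 (i - k1), ?_, ?_, ?_, ?_⟩
  · by_cases hk1 : 0 < k1
    · simp [hk1, h10]
    · have hk10 : k1 = 0 := by omega
      have : z1 0 = w := by rw [← h1k, hk10]
      simp [hk1, h20, ← h10, this]
  · by_cases hk2 : 0 < k2
    · have : ¬ (k1 + k2 < k1) := by omega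
      simp only [this, if_false]
      have : k1 + k2 - k1 = k2 := by omega
      rw [this, h2k]
    · have hk20 : k2 = 0 := by omega
      have hw : z2 0 = y := by rw [← h2k, hk20]
      by_cases hk1 : k1 + k2 < k1
      · omega
      · simp only [hk1, if_false]
        have : k1 + k2 - k1 = 0 := by omega
        rw [this, hw]
  · intro i hi
    by_cases h : i < k1
    · simp only [h, if_true]; exact h1m i (le_of_lt h)
    · simp only [h, if_false]; exact h2m (i - k1) (by omega)
  · intro i hi
    by_cases h : i < k1
    · by_cases h' : i + 1 < k1
      · simp only [h, h', if_true]
        exact h1s i (by omega)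
      · have hik : i + 1 = k1 := by omega
        simp only [h, h', if_true, if_false]
        have e1 : z2 (i + 1 - k1) = z1 (i + 1) := by
          have : i + 1 - k1 = 0 := by omega
          rw [this, h20, ← h1k, hik]
        rw [e1]
        exact h1s i (by omega)
    · have h' : ¬ (i + 1 < k1) := by omega
      simp only [h, h', if_false]
      have e2 : i + 1 - k1 = (i - k1) + 1 := by omega
      rw [e2]
      exact h2s (i - k1) (by omega)

lemma chain_map {g l : ℝ} {E : Set (ℝ × ℝ)}
    (hE : E = Fm g l false '' E ∪ Fm g l true '' E) (i : Bool) {ε : ℝ} {x y : ℝ × ℝ}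
    (h : ChainP E ε x y) : ChainP E (max |g| |l| * ε) (Fm g l i x) (Fm g l i y) := by
  obtain ⟨k, z, h0, hk, hm, hs⟩ := h
  refine ⟨k, fun j => Fm g l i (z j), by simp only [h0], by simp only [hk], fun j hj => Fm_mem hE i (hm j hj),
    fun j hj => ?_⟩
  calc dist (Fm g l i (z (j + 1))) (Fm g l i (z j)) ≤ max |g| |l| * dist (z (j + 1)) (z j) :=
        Fm_lip _ _ _
    _ ≤ max |g| |l| * ε :=
        mul_le_mul_of_nonneg_left (hs j hj) (le_trans (abs_nonneg g) (le_max_left _ _))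

lemma chains_exist {g l : ℝ} {E : Set (ℝ × ℝ)} (hg : |g| < 1) (hl : |l| < 1)
    {R : ℝ} (hR : ∀ x ∈ E, ‖x‖ ≤ R)
    (hE : E = Fm g l false '' E ∪ Fm g l true '' E)
    {p q : ℝ × ℝ} (hp : p ∈ E) (hq : q ∈ E) (hpq : Fm g l false p = Fm g l true q) :
    ∀ (n : ℕ), ∀ x ∈ E, ∀ y ∈ E, ChainP E ((max |g| |l|) ^ n * (2 * R)) x y := by
  intro n
  induction n with
  | zero =>
      intro x hx y hy
      apply chain_single hx hy
      rw [pow_zero, one_mul, dist_eq_norm]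
      calc ‖y - x‖ ≤ ‖y‖ + ‖x‖ := norm_sub_le _ _
        _ ≤ 2 * R := by have := hR x hx; have := hR y hy; linarith
  | succ n ih =>
      intro x hx y hy
      have heps : max |g| |l| * ((max |g| |l|) ^ n * (2 * R)) = (max |g| |l|) ^ (n+1) * (2 * R) := by
        ring
      rw [hE] at hx hy
      rcases hx with ⟨x', hx', hxe⟩ | ⟨x', hx', hxe⟩ <;>
        rcases hy with ⟨y', hy', hye⟩ | ⟨y', hy', hye⟩
      · rw [← hxe, ← hye]
        rw [← heps]
        exact chain_map hE false (ih x' hx' y' hy')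
      · rw [← hxe, ← hye]
        refine chain_concat (w := Fm g l false p) ?_ ?_
        · rw [← heps]; exact chain_map hE false (ih x' hx' p hp)
        · rw [hpq, ← heps]; exact chain_map hE true (ih q hq y' hy')
      · rw [← hxe, ← hye]
        refine chain_concat (w := Fm g l true q) ?_ ?_
        · rw [← heps]; exact chain_map hE true (ih x' hx' q hq)
        · rw [← heps]
          have := chain_map hE false (ih p hp y' hy')
          rwa [hpq] at this
      · rw [← hxe, ← hye]
        rw [← heps]
        exact chain_map hE true (ih x' hx' y' hy')

lemma connected_of_chains {E : Set (ℝ × ℝ)} (hEc : IsCompact E) (hEne : E.Nonempty)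
    (hch : ∀ ε > (0:ℝ), ∀ x ∈ E, ∀ y ∈ E, ChainP E ε x y) : IsConnected E := by
  refine ⟨hEne, ?_⟩
  rw [isPreconnected_iff_subset_of_fully_disjoint_closed hEc.isClosed]
  intro u v hu hv hcover hdisj
  by_contra hcon
  obtain ⟨hnu, hnv⟩ := not_or.mp hcon
  obtain ⟨a, ha, hau⟩ := Set.not_subset.mp hnu
  obtain ⟨b, hb, hbv⟩ := Set.not_subset.mp hnv
  have hav : a ∈ v := (hcover ha).resolve_left hau
  have hbu : b ∈ u := (hcover hb).resolve_right hbv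
  set A : Set (ℝ × ℝ) := E ∩ u with hA
  set B : Set (ℝ × ℝ) := E ∩ v with hB
  have hAc : IsCompact A := hEc.inter_right hu
  have hBc : IsClosed B := hEc.isClosed.inter hv
  have hBne : B.Nonempty := ⟨a, ha, hav⟩
  have hAne : A.Nonempty := ⟨b, hb, hbu⟩
  have hABdisj : Disjoint A B := by
    apply Set.disjoint_of_subset (Set.inter_subset_right) (Set.inter_subset_right) hdisj
  -- positive distance
  obtain ⟨m, hmA, hmin⟩ := hAc.exists_isMinOn hAne (Metric.continuous_infDist_pt B).continuousOn
  have hmpos : 0 < Metric.infDist m B := by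
    rw [← hBc.notMem_iff_infDist_pos hBne]
    intro hmB
    exact Set.disjoint_left.mp hABdisj hmA hmB
  set ε := Metric.infDist m B with hε
  have hkey : ∀ p ∈ A, ∀ q ∈ B, ε ≤ dist p q := by
    intro p hp q hq
    calc ε ≤ Metric.infDist p B := hmin hp
      _ ≤ dist p q := Metric.infDist_le_dist_of_mem hq
  -- chain from b (∈ A) to a (∈ B) with step < ε
  obtain ⟨k, z, h0, hk, hm, hs⟩ := hch (ε / 2) (by positivity) b hb a ha
  have hzB : ∃ i, i ≤ k ∧ z i ∈ B := ⟨k, le_refl k, by rw [hk]; exact ⟨ha, hav⟩⟩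
  classical
  set j := Nat.find hzB with hj
  obtain ⟨hjk, hjB⟩ := Nat.find_spec hzB
  rw [← hj] at hjk hjB
  have hj0 : j ≠ 0 := by
    intro h
    rw [h, h0] at hjB
    exact Set.disjoint_left.mp hABdisj ⟨hb, hbu⟩ hjB
  have hjpred : z (j - 1) ∈ A := by
    have hjE : z (j - 1) ∈ E := hm _ (by omega)
    have : z (j - 1) ∉ B := by
      intro hmem
      have hlt : j - 1 < Nat.find hzB := by rw [← hj]; omega
      exact Nat.find_min hzB hlt ⟨by omega, hmem⟩
    rcases hcover hjE with h' | h'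
    · exact ⟨hjE, h'⟩
    · exact absurd ⟨hjE, h'⟩ this
  have hdistlow : ε ≤ dist (z (j - 1)) (z j) := hkey _ hjpred _ hjB
  have hdisthigh : dist (z j) (z (j - 1)) ≤ ε / 2 := by
    have := hs (j - 1) (by omega)
    have hj1 : j - 1 + 1 = j := by omega
    rwa [hj1] at this
  rw [dist_comm] at hdisthigh
  linarith

end Chains

end Stmt8Aux

open Stmt8Aux in
theorem stmt8 (g l : ℝ) (hg : g ∈ Set.Ioo (-1 : ℝ) 1) (hl : l ∈ Set.Ioo (-1 : ℝ) 1)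
    (hgl : g ≠ l)
    (E : Set (ℝ × ℝ)) (hEc : IsCompact E) (hEne : E.Nonempty)
    (hE : E = (fun p : ℝ × ℝ => (g * p.1, l * p.2)) '' E ∪
        (fun p : ℝ × ℝ => (g * p.1 + 1, l * p.2 + 1)) '' E) :
    IsConnected E ↔
      ∃ a : ℕ → ℝ, a 0 = 1 ∧ (∀ n, a n = -1 ∨ a n = 0 ∨ a n = 1) ∧
        (∑' n : ℕ, a n * g ^ n) = 0 ∧ (∑' n : ℕ, a n * l ^ n) = 0 := by
  have hg1 : |g| < 1 := abs_lt.mpr ⟨hg.1, hg.2⟩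
  have hl1 : |l| < 1 := abs_lt.mpr ⟨hl.1, hl.2⟩
  have hc : max |g| |l| < 1 := max_lt hg1 hl1
  have hc0 : (0:ℝ) ≤ max |g| |l| := le_trans (abs_nonneg g) (le_max_left _ _)
  have e0 : (fun p : ℝ × ℝ => (g * p.1, l * p.2)) = Fm g l false := by
    funext p; simp [Fm]
  have e1 : (fun p : ℝ × ℝ => (g * p.1 + 1, l * p.2 + 1)) = Fm g l true := by
    funext p; simp [Fm]
  have hE' : E = Fm g l false '' E ∪ Fm g l true '' E := by rw [← e0, ← e1]; exact hE
  have hcontF : Continuous (Fm g l false) := by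
    apply Continuous.prodMk <;> fun_prop [Fm]
  have hcontT : Continuous (Fm g l true) := by
    apply Continuous.prodMk <;> fun_prop [Fm]
  constructor
  · intro hconn
    -- extract a touching point of the two pieces
    have hA0c : IsCompact (Fm g l false '' E) := hEc.image hcontF
    have hA1c : IsCompact (Fm g l true '' E) := hEc.image hcontT
    have hnd : ¬ Disjoint (Fm g l false '' E) (Fm g l true '' E) := by
      intro hd
      have hcover : E ⊆ Fm g l false '' E ∪ Fm g l true '' E := hE'.le
      rcases (isPreconnected_iff_subset_of_fully_disjoint_closed hEc.isClosed).mp hconn.2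
          (Fm g l false '' E) (Fm g l true '' E) hA0c.isClosed hA1c.isClosed hcover hd with
        h | h
      · obtain ⟨x0, hx0⟩ := hEne
        have h1 : Fm g l true x0 ∈ Fm g l true '' E := ⟨x0, hx0, rfl⟩
        have h0 : Fm g l true x0 ∈ Fm g l false '' E := h (Fm_mem hE' true hx0)
        exact Set.disjoint_left.mp hd h0 h1
      · obtain ⟨x0, hx0⟩ := hEne
        have h1 : Fm g l false x0 ∈ Fm g l false '' E := ⟨x0, hx0, rfl⟩
        have h0 : Fm g l false x0 ∈ Fm g l true '' E := h (Fm_mem hE' false hx0)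
        exact Set.disjoint_left.mp hd h1 h0
    obtain ⟨w, hw0, hw1⟩ := Set.not_disjoint_iff.mp hnd
    obtain ⟨p, hp, hpe⟩ := hw0
    obtain ⟨q, hq, hqe⟩ := hw1
    obtain ⟨d, hd⟩ := mem_range_phi hg1 hl1 hEc hE' hp
    obtain ⟨e, he⟩ := mem_range_phi hg1 hl1 hEc hE' hq
    set a : ℕ → ℝ := fun n => Nat.rec 1 (fun m _ => dR e m - dR d m) n with ha
    have ha0 : a 0 = 1 := rfl
    have hasucc : ∀ m, a (m + 1) = dR e m - dR d m := fun m => rfl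
    have habs : ∀ n, |a n| ≤ 1 := by
      intro n
      cases n with
      | zero => rw [ha0]; norm_num
      | succ m =>
          rw [hasucc]
          unfold dR
          rcases e m <;> rcases d m <;> simp
    have hpeq : Fm g l false p = Fm g l true q := by rw [hpe, hqe]
    have hfst : g * p.1 + 0 = g * q.1 + 1 := congrArg Prod.fst hpeq
    have hsnd : l * p.2 + 0 = l * q.2 + 1 := congrArg Prod.snd hpeq
    refine ⟨a, ha0, ?_, ?_, ?_⟩
    · intro n
      cases n with
      | zero => right; right; exact ha0
      | succ m =>
          rw [hasucc]
          unfold dR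
          rcases e m <;> rcases d m <;> simp
    · rw [tsum_shift habs hg1, ha0]
      have hsum : ∑' n, a (n + 1) * g ^ n = q.1 - p.1 := by
        have h1 : ∀ n, a (n + 1) * g ^ n = dR e n * g ^ n - dR d n * g ^ n := by
          intro n; rw [hasucc]; ring
        rw [tsum_congr h1, Summable.tsum_sub (summable_aux (dR_abs e) hg1) (summable_aux (dR_abs d) hg1)]
        rw [hd, he]
        rfl
      rw [hsum]
      have hp1 : p.1 + 0 = q.1 * 1 + 1 / g * 1 ∨ True := Or.inr trivial
      nlinarith [hfst]
    · rw [tsum_shift habs hl1, ha0]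
      have hsum : ∑' n, a (n + 1) * l ^ n = q.2 - p.2 := by
        have h1 : ∀ n, a (n + 1) * l ^ n = dR e n * l ^ n - dR d n * l ^ n := by
          intro n; rw [hasucc]; ring
        rw [tsum_congr h1, Summable.tsum_sub (summable_aux (dR_abs e) hl1) (summable_aux (dR_abs d) hl1)]
        rw [hd, he]
        rfl
      rw [hsum]
      nlinarith [hsnd]
  · rintro ⟨a, ha0, har, hag, hal⟩
    have habs : ∀ n, |a n| ≤ 1 := by
      intro n; rcases har n with h | h | h <;> rw [h] <;> norm_num
    set d : ℕ → Bool := fun n => decide (a (n + 1) = -1) with hdd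
    set e : ℕ → Bool := fun n => decide (a (n + 1) = 1) with hee
    have hde : ∀ n, dR e n - dR d n = a (n + 1) := by
      intro n
      rcases har (n + 1) with h | h | h <;>
        · simp only [dR, hdd, hee, h]
          norm_num
    set p := phi g l d with hp
    set q := phi g l e with hq
    have hpE : p ∈ E := phi_mem hg1 hl1 hEc hEne hE' d
    have hqE : q ∈ E := phi_mem hg1 hl1 hEc hEne hE' e
    have hsumg : ∑' n, a (n + 1) * g ^ n = q.1 - p.1 := by
      have h1 : ∀ n, a (n + 1) * g ^ n = dR e n * g ^ n - dR d n * g ^ n := by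
        intro n; rw [← hde]; ring
      rw [tsum_congr h1, Summable.tsum_sub (summable_aux (dR_abs e) hg1) (summable_aux (dR_abs d) hg1)]
      rfl
    have hsuml : ∑' n, a (n + 1) * l ^ n = q.2 - p.2 := by
      have h1 : ∀ n, a (n + 1) * l ^ n = dR e n * l ^ n - dR d n * l ^ n := by
        intro n; rw [← hde]; ring
      rw [tsum_congr h1, Summable.tsum_sub (summable_aux (dR_abs e) hl1) (summable_aux (dR_abs d) hl1)]
      rfl
    have hgEq : g * p.1 + 0 = g * q.1 + 1 := by
      have := hag
      rw [tsum_shift habs hg1, ha0, hsumg] at this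
      nlinarith [this]
    have hlEq : l * p.2 + 0 = l * q.2 + 1 := by
      have := hal
      rw [tsum_shift habs hl1, ha0, hsuml] at this
      nlinarith [this]
    have htouch : Fm g l false p = Fm g l true q := by
      unfold Fm
      simp only [if_true, if_false]
      exact Prod.ext (by simpa using hgEq) (by simpa using hlEq)
    obtain ⟨R, hR⟩ := hEc.isBounded.exists_norm_le
    apply connected_of_chains hEc hEne
    intro ε hε x hx y hy
    have h0 : Filter.Tendsto (fun n : ℕ => (max |g| |l|) ^ n * (2 * R))
        Filter.atTop (nhds 0) := by
      have := (tendsto_pow_atTop_nhds_zero_of_lt_one hc0 hc).mul_const (2 * R)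
      simpa using this
    have hev : ∀ᶠ n in Filter.atTop, (max |g| |l|) ^ n * (2 * R) < ε :=
      Filter.Tendsto.eventually_lt_const hε h0
    obtain ⟨n, hn⟩ := hev.exists
    exact chain_mono (chains_exist hg1 hl1 hR hE' hpE hqE htouch n x hx y hy) (le_of_lt hn)
end

section
/- Let ℳ = {z ∈ ℂ : |z| < 1 and ∃ f ∈ ℬ, f(z) = 0}. If x ∈ (−1,1) is a real number lying in the closure of ℳ \ ℝ (i.e., x is a limit of nonreal points of ℳ), then there exists f ∈ ℬ with f(x) = f'(x) = 0. -/
open Filter Finset Complex Topology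


/-- The "Mandelbrot set for pairs of linear maps": points `z` in the open unit disk which are
zeros of some power series `1 + ∑ aₙ zⁿ` with coefficients `aₙ ∈ {-1,0,1}`. -/
def McalM : Set ℂ :=
  {z | ‖z‖ < 1 ∧ ∃ a : ℕ → ℂ, a 0 = 1 ∧ (∀ n, a n = -1 ∨ a n = 0 ∨ a n = 1) ∧
    (∑' n : ℕ, a n * z ^ n) = 0}


private lemma S_bound {z w : ℂ} {r : ℝ} (hz : ‖z‖ ≤ r) (hw : ‖w‖ ≤ r) (n : ℕ) :
    ‖∑ i ∈ range (n + 1), z ^ i * w ^ (n - i)‖ ≤ ((n : ℝ) + 1) * r ^ n := by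
  have hr : 0 ≤ r := le_trans (norm_nonneg z) hz
  calc ‖∑ i ∈ range (n + 1), z ^ i * w ^ (n - i)‖
      ≤ ∑ i ∈ range (n + 1), ‖z ^ i * w ^ (n - i)‖ := norm_sum_le _ _
    _ ≤ ∑ _i ∈ range (n + 1), r ^ n := by
        apply Finset.sum_le_sum
        intro i hi
        have hin : i ≤ n := by simpa [Nat.lt_succ_iff] using hi
        rw [norm_mul, norm_pow, norm_pow]
        have h1 : ‖z‖ ^ i ≤ r ^ i := pow_le_pow_left₀ (norm_nonneg _) hz i
        have h2 : ‖w‖ ^ (n - i) ≤ r ^ (n - i) := pow_le_pow_left₀ (norm_nonneg _) hw _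
        calc ‖z‖ ^ i * ‖w‖ ^ (n - i) ≤ r ^ i * r ^ (n - i) :=
              mul_le_mul h1 h2 (by positivity) (by positivity)
          _ = r ^ n := by rw [← pow_add]; congr 1; omega
    _ = ((n : ℝ) + 1) * r ^ n := by
        rw [Finset.sum_const, card_range, nsmul_eq_mul]; push_cast; ring

theorem stmt11 (x : ℝ) (hx : x ∈ Set.Ioo (-1 : ℝ) 1)
    (hcl : (x : ℂ) ∈ closure (McalM \ {z : ℂ | z.im = 0})) :
    IsDoubleZero x := by
  obtain ⟨hx1, hx2⟩ := hx
  have hxabs : |x| < 1 := abs_lt.2 ⟨hx1, hx2⟩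
  set r : ℝ := (|x| + 1) / 2 with hr_def
  have hxr : |x| < r := by rw [hr_def]; linarith
  have hr1 : r < 1 := by rw [hr_def]; linarith
  have hr0 : (0 : ℝ) ≤ r := by
    have := abs_nonneg x; rw [hr_def]; linarith
  obtain ⟨z, hz, hzlim⟩ := mem_closure_iff_seq_limit.1 hcl
  -- coefficients for each k
  have hcoef : ∀ k, ∃ a : ℕ → ℂ, a 0 = 1 ∧ (∀ n, a n = -1 ∨ a n = 0 ∨ a n = 1) ∧
      (∑' n : ℕ, a n * (z k) ^ n) = 0 := fun k => (hz k).1.2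
  choose A hA0 hAval hAsum using hcoef
  have hAle : ∀ k n, ‖A k n‖ ≤ 1 := by
    intro k n
    rcases hAval k n with h | h | h <;> simp [h]
  -- conjugate values
  set w : ℕ → ℂ := fun k => (starRingEnd ℂ) (z k) with hw_def
  have hznorm : ∀ k, ‖z k‖ < 1 := by
    intro k; exact (hz k).1.1
  have hwnorm : ∀ k, ‖w k‖ = ‖z k‖ := by
    intro k; simp [hw_def]
  have hconjA : ∀ k n, (starRingEnd ℂ) (A k n) = A k n := by
    intro k n; rcases hAval k n with h | h | h <;> simp [h]
  have hsz : ∀ k, Summable (fun n => A k n * (z k) ^ n) := by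
    intro k
    apply Summable.of_norm_bounded (g := fun n => ‖z k‖ ^ n)
      (summable_geometric_of_lt_one (norm_nonneg _) (hznorm k))
    intro n
    rw [norm_mul, norm_pow]
    exact mul_le_of_le_one_left (by positivity) (hAle k n)
  have hsw : ∀ k, Summable (fun n => A k n * (w k) ^ n) := by
    intro k
    apply Summable.of_norm_bounded (g := fun n => ‖z k‖ ^ n)
      (summable_geometric_of_lt_one (norm_nonneg _) (hznorm k))
    intro n
    rw [norm_mul, norm_pow, hwnorm]
    exact mul_le_of_le_one_left (by positivity) (hAle k n)
  have hAsumw : ∀ k, (∑' n : ℕ, A k n * (w k) ^ n) = 0 := by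
    intro k
    have : (∑' n : ℕ, A k n * (w k) ^ n) = star (∑' n : ℕ, A k n * (z k) ^ n) := by
      rw [tsum_star]
      refine tsum_congr fun n => ?_
      have : star (A k n * (z k) ^ n) = (starRingEnd ℂ) (A k n) * ((starRingEnd ℂ) (z k)) ^ n := by
        simp [star_pow, mul_comm]
      rw [this, hconjA, hw_def]
    rw [this, hAsum k]; simp
  -- the divided-difference sum vanishes at each k
  have key : ∀ k, (∑' n : ℕ, A k (n + 1) * (∑ i ∈ range (n + 1), (z k) ^ i * (w k) ^ (n - i))) = 0 := by
    intro k
    have hsub : Summable (fun n => A k n * (z k) ^ n - A k n * (w k) ^ n) := (hsz k).sub (hsw k)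
    have h0 : (∑' n : ℕ, (A k n * (z k) ^ n - A k n * (w k) ^ n)) = 0 := by
      rw [Summable.tsum_sub (hsz k) (hsw k), hAsum k, hAsumw k, sub_zero]
    rw [Summable.tsum_eq_zero_add hsub] at h0
    simp only [pow_zero, mul_one, sub_self, zero_add] at h0
    have hfac : ∀ n : ℕ, A k (n + 1) * (z k) ^ (n + 1) - A k (n + 1) * (w k) ^ (n + 1)
        = (A k (n + 1) * (∑ i ∈ range (n + 1), (z k) ^ i * (w k) ^ (n - i))) * (z k - w k) := by
      intro n
      have hg := geom_sum₂_mul (z k) (w k) (n + 1)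
      simp only [Nat.add_sub_cancel] at hg
      rw [← mul_sub, ← hg, mul_assoc]
    rw [tsum_congr hfac, tsum_mul_right] at h0
    have hne : z k - w k ≠ 0 := by
      rw [sub_ne_zero]
      intro h
      have him : (z k).im ≠ 0 := (hz k).2
      exact him (Complex.conj_eq_iff_im.1 h.symm)
    exact (mul_eq_zero.1 h0).resolve_right hne
  -- compactness : extract convergent subsequence of coefficients
  have hK : IsCompact (Set.univ.pi fun _ : ℕ => ({-1, 0, 1} : Set ℂ)) :=
    isCompact_univ_pi fun _ => (Set.toFinite _).isCompact
  have hmemA : ∀ k, A k ∈ Set.univ.pi fun _ : ℕ => ({-1, 0, 1} : Set ℂ) := by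
    intro k n _
    rcases hAval k n with h | h | h <;> simp [h]
  obtain ⟨a, ha_mem, φ, hφ, hconv⟩ := hK.isSeqCompact hmemA
  have hptA : ∀ n, Tendsto (fun k => A (φ k) n) atTop (𝓝 (a n)) :=
    fun n => tendsto_pi_nhds.1 hconv n
  have haval : ∀ n, a n = -1 ∨ a n = 0 ∨ a n = 1 := by
    intro n
    have := ha_mem n (Set.mem_univ n)
    simpa using this
  have hzφ : Tendsto (fun k => z (φ k)) atTop (𝓝 (x : ℂ)) := hzlim.comp hφ.tendsto_atTop
  have hwφ : Tendsto (fun k => w (φ k)) atTop (𝓝 (x : ℂ)) := by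
    have := (Complex.continuous_conj.tendsto (x : ℂ)).comp hzφ
    simpa [hw_def, Complex.conj_ofReal, Function.comp_def] using this
  have hev : ∀ᶠ k in atTop, ‖z (φ k)‖ ≤ r := by
    have hn : Tendsto (fun k => ‖z (φ k)‖) atTop (𝓝 ‖(x : ℂ)‖) := hzφ.norm
    have hxn : ‖(x : ℂ)‖ < r := by rwa [Complex.norm_real, Real.norm_eq_abs]
    exact (hn.eventually_lt_const hxn).mono fun k hk => hk.le
  -- first sum : f(x) = 0
  have c1 : (∑' n : ℕ, a n * (x : ℂ) ^ n) = 0 := by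
    have hlim : Tendsto (fun k => ∑' n : ℕ, A (φ k) n * (z (φ k)) ^ n) atTop
        (𝓝 (∑' n : ℕ, a n * (x : ℂ) ^ n)) := by
      apply tendsto_tsum_of_dominated_convergence (bound := fun n => r ^ n)
        (summable_geometric_of_lt_one hr0 hr1)
      · intro n
        exact (hptA n).mul (hzφ.pow n)
      · filter_upwards [hev] with k hk n
        rw [norm_mul, norm_pow]
        calc ‖A (φ k) n‖ * ‖z (φ k)‖ ^ n ≤ 1 * r ^ n := by
              apply mul_le_mul (hAle _ n) (pow_le_pow_left₀ (norm_nonneg _) hk n)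
                (by positivity) zero_le_one
          _ = r ^ n := one_mul _
    have hlim0 : Tendsto (fun k => ∑' n : ℕ, A (φ k) n * (z (φ k)) ^ n) atTop (𝓝 0) := by
      simpa [hAsum] using tendsto_const_nhds (x := (0 : ℂ)) (f := atTop (α := ℕ))
    exact tendsto_nhds_unique hlim hlim0
  -- second sum : f'(x) = 0
  have sbound : Summable (fun n : ℕ => ((n : ℝ) + 1) * r ^ n) := by
    have s1 : Summable (fun n : ℕ => (n : ℝ) * r ^ n) := by
      have := summable_pow_mul_geometric_of_norm_lt_one (R := ℝ) 1
        (r := r) (by rwa [Real.norm_eq_abs, _root_.abs_of_nonneg hr0])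
      simpa using this
    have s2 : Summable (fun n : ℕ => r ^ n) := summable_geometric_of_lt_one hr0 hr1
    exact (s1.add s2).congr fun n => by ring
  have c2 : (∑' n : ℕ, a (n + 1) * (∑ i ∈ range (n + 1), (x : ℂ) ^ i * (x : ℂ) ^ (n - i))) = 0 := by
    have hlim : Tendsto
        (fun k => ∑' n : ℕ, A (φ k) (n + 1) * (∑ i ∈ range (n + 1), (z (φ k)) ^ i * (w (φ k)) ^ (n - i)))
        atTop (𝓝 (∑' n : ℕ, a (n + 1) * (∑ i ∈ range (n + 1), (x : ℂ) ^ i * (x : ℂ) ^ (n - i)))) := by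
      apply tendsto_tsum_of_dominated_convergence (bound := fun n : ℕ => ((n : ℝ) + 1) * r ^ n) sbound
      · intro n
        refine (hptA (n + 1)).mul ?_
        apply tendsto_finset_sum
        intro i _
        exact (hzφ.pow i).mul (hwφ.pow (n - i))
      · filter_upwards [hev] with k hk n
        rw [norm_mul]
        have hwk : ‖w (φ k)‖ ≤ r := by rw [hwnorm]; exact hk
        calc ‖A (φ k) (n + 1)‖ * ‖∑ i ∈ range (n + 1), (z (φ k)) ^ i * (w (φ k)) ^ (n - i)‖
            ≤ 1 * (((n : ℝ) + 1) * r ^ n) := by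
              apply mul_le_mul (hAle _ _) (S_bound hk hwk n) (norm_nonneg _) zero_le_one
          _ = ((n : ℝ) + 1) * r ^ n := one_mul _
    have hlim0 : Tendsto
        (fun k => ∑' n : ℕ, A (φ k) (n + 1) * (∑ i ∈ range (n + 1), (z (φ k)) ^ i * (w (φ k)) ^ (n - i)))
        atTop (𝓝 0) := by
      simpa [key] using tendsto_const_nhds (x := (0 : ℂ)) (f := atTop (α := ℕ))
    exact tendsto_nhds_unique hlim hlim0
  have c2' : (∑' n : ℕ, ((n : ℂ) + 1) * a (n + 1) * (x : ℂ) ^ n) = 0 := by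
    rw [← c2]
    refine tsum_congr fun n => ?_
    have hS : (∑ i ∈ range (n + 1), (x : ℂ) ^ i * (x : ℂ) ^ (n - i)) = ((n : ℂ) + 1) * (x : ℂ) ^ n := by
      have : ∀ i ∈ range (n + 1), (x : ℂ) ^ i * (x : ℂ) ^ (n - i) = (x : ℂ) ^ n := by
        intro i hi
        have hin : i ≤ n := by simpa [Nat.lt_succ_iff] using hi
        rw [← pow_add]; congr 1; omega
      rw [Finset.sum_congr rfl this, Finset.sum_const, card_range, nsmul_eq_mul]
      push_cast; ring
    rw [hS]; ring
  -- realify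
  have ha0 : a 0 = 1 := by
    have : Tendsto (fun k => A (φ k) 0) atTop (𝓝 (1 : ℂ)) := by
      simpa [hA0] using tendsto_const_nhds (x := (1 : ℂ)) (f := atTop (α := ℕ))
    exact tendsto_nhds_unique (hptA 0) this
  set b : ℕ → ℝ := fun n => (a n).re with hb_def
  have hab : ∀ n, (b n : ℂ) = a n := by
    intro n
    rcases haval n with h | h | h <;> simp [hb_def, h]
  refine ⟨b, ?_, ?_, ?_, ?_⟩
  · simp [hb_def, ha0]
  · intro n
    rcases haval n with h | h | h <;> simp [hb_def, h]
  · have : ((∑' n : ℕ, b n * x ^ n : ℝ) : ℂ) = ∑' n : ℕ, a n * (x : ℂ) ^ n := by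
      rw [Complex.ofReal_tsum]
      refine tsum_congr fun n => ?_
      push_cast [hab n]
      ring
    have h0 := this.trans c1
    exact_mod_cast h0
  · have : ((∑' n : ℕ, ((n : ℝ) + 1) * b (n + 1) * x ^ n : ℝ) : ℂ)
        = ∑' n : ℕ, ((n : ℂ) + 1) * a (n + 1) * (x : ℂ) ^ n := by
      rw [Complex.ofReal_tsum]
      refine tsum_congr fun n => ?_
      push_cast [hab (n + 1)]
      ring
    have h0 := this.trans c2'
    exact_mod_cast h0
end

section
/- Let 𝒩 = {(γ,λ) ∈ (−1,1)² : ∃ f ∈ ℬ, f(γ) = f(λ) = 0}. If λ ∈ (−1,1) and the point (λ,λ) lies in the closure of 𝒩 \ {(t,t) : t ∈ ℝ} (i.e., (λ,λ) is a limit of points (γₙ,λₙ) ∈ 𝒩 with γₙ ≠ λₙ), then there exists f ∈ ℬ with f(λ) = f'(λ) = 0. -/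
/-- The connectedness locus `𝒩`: pairs `(γ,λ) ∈ (-1,1)²` such that some power series
`1 + ∑ aₙ xⁿ` with coefficients in `{-1,0,1}` vanishes at both `γ` and `λ`. -/
def NcalN : Set (ℝ × ℝ) :=
  {p | p.1 ∈ Set.Ioo (-1 : ℝ) 1 ∧ p.2 ∈ Set.Ioo (-1 : ℝ) 1 ∧
    ∃ a : ℕ → ℝ, a 0 = 1 ∧ (∀ n, a n = -1 ∨ a n = 0 ∨ a n = 1) ∧
      (∑' n : ℕ, a n * p.1 ^ n) = 0 ∧ (∑' n : ℕ, a n * p.2 ^ n) = 0}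

private lemma abs_le_one_of_tri {t : ℝ} (h : t = -1 ∨ t = 0 ∨ t = 1) : |t| ≤ 1 := by
  rcases h with h | h | h <;> rw [h] <;> norm_num

theorem stmt12 (l : ℝ) (hl : l ∈ Set.Ioo (-1 : ℝ) 1)
    (hcl : ((l, l) : ℝ × ℝ) ∈ closure (NcalN \ {p : ℝ × ℝ | p.1 = p.2})) :
    IsDoubleZero l := by
  obtain ⟨u, hu, hulim⟩ := mem_closure_iff_seq_limit.mp hcl
  have hmem : ∀ n, u n ∈ NcalN := fun n => (hu n).1
  have hne : ∀ n, (u n).1 ≠ (u n).2 := fun n => (hu n).2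
  simp only [NcalN, Set.mem_setOf_eq] at hmem
  have hne' := hne
  choose ha0 ha1 a haa0 haa1 haγ haL using hmem
  -- limits of the coordinates
  have hγlim : Filter.Tendsto (fun n => (u n).1) Filter.atTop (nhds l) :=
    (continuous_fst.tendsto _).comp hulim
  have hLlim : Filter.Tendsto (fun n => (u n).2) Filter.atTop (nhds l) :=
    (continuous_snd.tendsto _).comp hulim
  -- compactness of coefficient space
  set S : Set (ℕ → ℝ) := Set.pi Set.univ fun _ => ({-1, 0, 1} : Set ℝ) with hS
  have hScl : IsCompact S := isCompact_univ_pi fun _ =>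
    (Set.toFinite ({-1, 0, 1} : Set ℝ)).isCompact
  have hmemS : ∀ n, a n ∈ S := by
    intro n
    rw [hS, Set.mem_univ_pi]
    intro k
    rcases haa1 n k with h | h | h <;> simp [h]
  obtain ⟨b, hbS, φ, hφmono, hφlim⟩ := hScl.tendsto_subseq hmemS
  have hbpt : ∀ k, Filter.Tendsto (fun n => a (φ n) k) Filter.atTop (nhds (b k)) := by
    intro k
    exact (tendsto_pi_nhds.mp hφlim) k
  have hbtri : ∀ k, b k = -1 ∨ b k = 0 ∨ b k = 1 := by
    intro k
    have := (Set.mem_univ_pi.mp hbS) k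
    simpa using this
  have hb0 : b 0 = 1 := by
    have h1 : Filter.Tendsto (fun n => a (φ n) 0) Filter.atTop (nhds 1) := by
      simpa [haa0] using (tendsto_const_nhds : Filter.Tendsto (fun _ : ℕ => (1:ℝ)) _ _)
    exact tendsto_nhds_unique (hbpt 0) h1
  -- the radius
  set r : ℝ := (|l| + 1) / 2 with hr
  have hl1 : |l| < 1 := abs_lt.mpr ⟨hl.1, hl.2⟩
  have hlr : |l| < r := by rw [hr]; linarith
  have hr1 : r < 1 := by rw [hr]; linarith
  have hr0 : (0:ℝ) ≤ r := by positivity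
  -- subsequences of coordinates
  have hγφ : Filter.Tendsto (fun n => (u (φ n)).1) Filter.atTop (nhds l) :=
    hγlim.comp hφmono.tendsto_atTop
  have hLphi : Filter.Tendsto (fun n => (u (φ n)).2) Filter.atTop (nhds l) :=
    hLlim.comp hφmono.tendsto_atTop
  have hevγ : ∀ᶠ n in Filter.atTop, |(u (φ n)).1| ≤ r :=
    (hγφ.abs.eventually_lt_const hlr).mono fun n h => h.le
  have hevL : ∀ᶠ n in Filter.atTop, |(u (φ n)).2| ≤ r :=
    (hLphi.abs.eventually_lt_const hlr).mono fun n h => h.le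
  have habs : ∀ n k, |a n k| ≤ 1 := fun n k => abs_le_one_of_tri (haa1 n k)
  refine ⟨b, hb0, hbtri, ?_, ?_⟩
  · -- f(l) = 0 by dominated convergence
    have hsum : Summable fun k : ℕ => r ^ k := summable_geometric_of_lt_one hr0 hr1
    have hT := tendsto_tsum_of_dominated_convergence (𝓕 := Filter.atTop)
      (f := fun n k => a (φ n) k * (u (φ n)).2 ^ k) (g := fun k => b k * l ^ k)
      (bound := fun k => r ^ k) hsum
      (fun k => (hbpt k).mul (hLphi.pow k)) ?_
    · have hzero : (fun n => ∑' k, a (φ n) k * (u (φ n)).2 ^ k) = fun _ => (0:ℝ) := by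
        funext n; exact haL (φ n)
      rw [hzero] at hT
      exact tendsto_nhds_unique hT tendsto_const_nhds
    · filter_upwards [hevL] with n hn
      intro k
      have : |a (φ n) k * (u (φ n)).2 ^ k| = |a (φ n) k| * |(u (φ n)).2| ^ k := by
        rw [abs_mul, abs_pow]
      rw [Real.norm_eq_abs, this]
      calc |a (φ n) k| * |(u (φ n)).2| ^ k ≤ 1 * r ^ k := by
            apply mul_le_mul (habs _ _) (pow_le_pow_left₀ (abs_nonneg _) hn k)
              (by positivity) one_pos.le
        _ = r ^ k := one_mul _
  · -- f'(l) = 0 by dominated convergence on difference quotients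
    set F : ℕ → ℕ → ℝ := fun n k =>
      a (φ n) (k + 1) * ∑ j ∈ Finset.range (k + 1), (u (φ n)).1 ^ j * (u (φ n)).2 ^ (k - j)
      with hF
    -- each F n sums to zero
    have hFsum0 : ∀ n, (∑' k, F n k) = 0 := by
      intro n
      set γ := (u (φ n)).1 with hγdef
      set μ := (u (φ n)).2 with hμdef
      have hγ1 : |γ| < 1 := abs_lt.mpr ⟨(ha0 (φ n)).1, (ha0 (φ n)).2⟩
      have hμ1 : |μ| < 1 := abs_lt.mpr ⟨(ha1 (φ n)).1, (ha1 (φ n)).2⟩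
      have hsγ : Summable fun k : ℕ => a (φ n) k * γ ^ k := by
        apply Summable.of_norm_bounded (summable_geometric_of_lt_one (abs_nonneg γ) hγ1)
        intro k
        rw [Real.norm_eq_abs, abs_mul, abs_pow]
        exact mul_le_of_le_one_left (by positivity) (habs _ _)
      have hsμ : Summable fun k : ℕ => a (φ n) k * μ ^ k := by
        apply Summable.of_norm_bounded (summable_geometric_of_lt_one (abs_nonneg μ) hμ1)
        intro k
        rw [Real.norm_eq_abs, abs_mul, abs_pow]
        exact mul_le_of_le_one_left (by positivity) (habs _ _)
      have hdiff : (∑' k : ℕ, (a (φ n) k * γ ^ k - a (φ n) k * μ ^ k)) = 0 := by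
        rw [Summable.tsum_sub hsγ hsμ, haγ (φ n), haL (φ n), sub_zero]
      have hsd : Summable fun k : ℕ => a (φ n) k * γ ^ k - a (φ n) k * μ ^ k := hsγ.sub hsμ
      rw [Summable.tsum_eq_zero_add hsd] at hdiff
      have h0 : a (φ n) 0 * γ ^ 0 - a (φ n) 0 * μ ^ 0 = 0 := by simp
      rw [h0, zero_add] at hdiff
      -- rewrite shifted terms via geom_sum₂_mul
      have hterm : ∀ k : ℕ, a (φ n) (k + 1) * γ ^ (k + 1) - a (φ n) (k + 1) * μ ^ (k + 1)
          = F n k * (γ - μ) := by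
        intro k
        rw [hF]
        have := geom_sum₂_mul γ μ (k + 1)
        simp only [Nat.add_sub_cancel] at this
        rw [← mul_sub, ← this]
        ring
      simp_rw [hterm] at hdiff
      rw [tsum_mul_right] at hdiff
      have hγμ : γ - μ ≠ 0 := sub_ne_zero.mpr (hne (φ n))
      exact (mul_eq_zero.mp hdiff).resolve_right hγμ
    -- dominated convergence
    have hsum2 : Summable fun k : ℕ => ((k:ℝ) + 1) * r ^ k := by
      have h1 : Summable fun k : ℕ => (k:ℝ) ^ 1 * r ^ k := by
        apply summable_pow_mul_geometric_of_norm_lt_one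
        rwa [Real.norm_eq_abs, abs_of_nonneg hr0]
      simpa [add_mul, one_mul, pow_one] using
        h1.add (summable_geometric_of_lt_one hr0 hr1)
    have hT := tendsto_tsum_of_dominated_convergence (𝓕 := Filter.atTop)
      (f := F) (g := fun k => ((k:ℝ) + 1) * b (k + 1) * l ^ k)
      (bound := fun k => ((k:ℝ) + 1) * r ^ k) hsum2 ?_ ?_
    · have hzero : (fun n => ∑' k, F n k) = fun _ => (0:ℝ) := by
        funext n; exact hFsum0 n
      rw [hzero] at hT
      exact tendsto_nhds_unique hT tendsto_const_nhds
    · -- pointwise convergence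
      intro k
      have hsumconv : Filter.Tendsto
          (fun n => ∑ j ∈ Finset.range (k + 1), (u (φ n)).1 ^ j * (u (φ n)).2 ^ (k - j))
          Filter.atTop (nhds (∑ j ∈ Finset.range (k + 1), l ^ j * l ^ (k - j))) := by
        apply tendsto_finset_sum
        intro j _
        exact (hγφ.pow j).mul (hLphi.pow (k - j))
      have hsumval : (∑ j ∈ Finset.range (k + 1), l ^ j * l ^ (k - j)) = ((k:ℝ) + 1) * l ^ k := by
        have : ∀ j ∈ Finset.range (k + 1), l ^ j * l ^ (k - j) = l ^ k := by
          intro j hj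
          have hj' : j ≤ k := by simp only [Finset.mem_range] at hj; omega
          rw [← pow_add, Nat.add_sub_cancel' hj']
        rw [Finset.sum_congr rfl this, Finset.sum_const, Finset.card_range,
          nsmul_eq_mul]
        push_cast
        ring
      rw [hsumval] at hsumconv
      have := (hbpt (k + 1)).mul hsumconv
      have heq : b (k + 1) * (((k:ℝ) + 1) * l ^ k) = ((k:ℝ) + 1) * b (k + 1) * l ^ k := by ring
      rw [heq] at this
      exact this
    · -- bound
      filter_upwards [hevγ, hevL] with n hγn hLn
      intro k
      rw [Real.norm_eq_abs, hF]
      have hbd : |∑ j ∈ Finset.range (k + 1), (u (φ n)).1 ^ j * (u (φ n)).2 ^ (k - j)|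
          ≤ ((k:ℝ) + 1) * r ^ k := by
        calc |∑ j ∈ Finset.range (k + 1), (u (φ n)).1 ^ j * (u (φ n)).2 ^ (k - j)|
            ≤ ∑ j ∈ Finset.range (k + 1), |(u (φ n)).1 ^ j * (u (φ n)).2 ^ (k - j)| :=
              Finset.abs_sum_le_sum_abs _ _
          _ ≤ ∑ j ∈ Finset.range (k + 1), r ^ k := by
              apply Finset.sum_le_sum
              intro j hj
              rw [abs_mul, abs_pow, abs_pow]
              have h1 : |(u (φ n)).1| ^ j ≤ r ^ j := pow_le_pow_left₀ (abs_nonneg _) hγn j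
              have h2 : |(u (φ n)).2| ^ (k - j) ≤ r ^ (k - j) :=
                pow_le_pow_left₀ (abs_nonneg _) hLn _
              calc |(u (φ n)).1| ^ j * |(u (φ n)).2| ^ (k - j) ≤ r ^ j * r ^ (k - j) :=
                    mul_le_mul h1 h2 (by positivity) (by positivity)
                _ = r ^ k := by
                    have hj' : j ≤ k := by simp only [Finset.mem_range] at hj; omega
                    rw [← pow_add, Nat.add_sub_cancel' hj']
          _ = ((k:ℝ) + 1) * r ^ k := by
              rw [Finset.sum_const, Finset.card_range, nsmul_eq_mul]; push_cast; ring
      rw [abs_mul]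
      calc |a (φ n) (k + 1)| * |∑ j ∈ Finset.range (k + 1), (u (φ n)).1 ^ j * (u (φ n)).2 ^ (k - j)|
          ≤ 1 * (((k:ℝ) + 1) * r ^ k) := mul_le_mul (habs _ _) hbd (abs_nonneg _) one_pos.le
        _ = ((k:ℝ) + 1) * r ^ k := one_mul _
end

section
/- Suppose (P, n, a, b) is good, and let m be the minimal integer ≥ n+1 such that P(x) − x^m > 0 for all x ∈ [a,b] (such m exists since P > 0 on [a,b] and b < 1). Then (P − x^m, m, a, b) is good. -/
/-- The quadruple `(P, n, a, b)` is *good* if `P` is a polynomial of degree at most `n` with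
constant coefficient `1` and all coefficients in `{-1,0,1}`, `1/2 < a < b < 1`,
`P(a) > a^{n+1}/(1-a)`, `P(b) > b^{n+1}/(1-b)`, `P > 0` on `[a,b]`, and
`P(x) < x^{n+1}/(1-x)` for some `x ∈ (a,b)`. -/
def Good (P : Polynomial ℝ) (n : ℕ) (a b : ℝ) : Prop :=
  P.natDegree ≤ n ∧ P.coeff 0 = 1 ∧ (∀ i, P.coeff i = -1 ∨ P.coeff i = 0 ∨ P.coeff i = 1) ∧
  1 / 2 < a ∧ a < b ∧ b < 1 ∧
  P.eval a > a ^ (n + 1) / (1 - a) ∧ P.eval b > b ^ (n + 1) / (1 - b) ∧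
  (∀ x ∈ Set.Icc a b, P.eval x > 0) ∧
  (∃ x ∈ Set.Ioo a b, P.eval x < x ^ (n + 1) / (1 - x))

theorem stmt13 (P : Polynomial ℝ) (n m : ℕ) (a b : ℝ) (hg : Good P n a b)
    (hm : n + 1 ≤ m)
    (hpos : ∀ x ∈ Set.Icc a b, (P - Polynomial.X ^ m).eval x > 0)
    (hmin : ∀ m', n + 1 ≤ m' → m' < m →
      ∃ x ∈ Set.Icc a b, (P - Polynomial.X ^ m').eval x ≤ 0) :
    Good (P - Polynomial.X ^ m) m a b := by
  obtain ⟨hdeg, hc0, hcoef, ha2, hab, hb1, hPa, hPb, hPpos, x0, hx0, hx0lt⟩ := hg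
  have hnm : n < m := by omega
  have ha0 : (0:ℝ) < a := by linarith
  have hb0 : (0:ℝ) < b := by linarith
  have ha1 : a < 1 := by linarith
  have h1a : (0:ℝ) < 1 - a := by linarith
  have h1b : (0:ℝ) < 1 - b := by linarith
  -- key endpoint estimate
  have key : ∀ c : ℝ, 0 < c → c < 1 → c ^ (n+1) / (1-c) < P.eval c →
      (P - Polynomial.X ^ m).eval c > c ^ (m + 1) / (1 - c) := by
    intro c hc0 hc1 hPc
    have hcm : c ^ m ≤ c ^ (n+1) := pow_le_pow_of_le_one hc0.le hc1.le hm
    have h1c : (0:ℝ) < 1 - c := by linarith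
    have heq : c ^ m / (1 - c) = c ^ m + c ^ (m+1) / (1 - c) := by
      field_simp
      ring
    have : c ^ m / (1 - c) ≤ c ^ (n+1) / (1 - c) := by gcongr
    simp only [Polynomial.eval_sub, Polynomial.eval_pow, Polynomial.eval_X]
    have : c ^ m / (1 - c) < P.eval c := lt_of_le_of_lt ‹c ^ m / (1-c) ≤ _› hPc
    linarith [heq ▸ this]
  refine ⟨?_, ?_, ?_, ha2, hab, hb1, ?_, ?_, hpos, ?_⟩
  · refine le_trans (Polynomial.natDegree_sub_le _ _) ?_
    simp [Polynomial.natDegree_X_pow]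
    omega
  · have : (Polynomial.X ^ m : Polynomial ℝ).coeff 0 = 0 := by
      rw [Polynomial.coeff_X_pow]
      simp; omega
    simp [this, hc0]
  · intro i
    rw [Polynomial.coeff_sub, Polynomial.coeff_X_pow]
    by_cases hi : i = m
    · have hPm : P.coeff i = 0 := Polynomial.coeff_eq_zero_of_natDegree_lt (by omega)
      rw [hi] at hPm
      simp [hi, hPm]
    · simp [hi]
      exact hcoef i
  · exact key a ha0 ha1 hPa
  · exact key b hb0 hb1 hPb
  · -- existence of x with Q(x) < x^{m+1}/(1-x)
    rcases eq_or_lt_of_le hm with heq | hlt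
    · -- m = n+1 : use original witness
      refine ⟨x0, hx0, ?_⟩
      obtain ⟨hax, hxb⟩ := hx0
      have hx0' : (0:ℝ) < x0 := by linarith
      have hx1 : x0 < 1 := by linarith
      have h1x : (0:ℝ) < 1 - x0 := by linarith
      have hxm : (0:ℝ) < x0 ^ m := pow_pos hx0' m
      simp only [Polynomial.eval_sub, Polynomial.eval_pow, Polynomial.eval_X]
      have heq2 : x0 ^ m / (1 - x0) = x0 ^ m + x0 ^ (m+1) / (1 - x0) := by
        field_simp; ring
      have : P.eval x0 < x0 ^ m / (1 - x0) := by rw [← heq]; exact hx0lt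
      linarith [heq2 ▸ this]
    · -- m > n+1 : use minimality at m-1
      obtain ⟨y, hy, hyle⟩ := hmin (m - 1) (by omega) (by omega)
      obtain ⟨hay, hyb⟩ := hy
      have hy2 : (1:ℝ)/2 < y := by linarith
      have hy0 : (0:ℝ) < y := by linarith
      have hy1 : y < 1 := by linarith
      have h1y : (0:ℝ) < 1 - y := by linarith
      have hyle' : P.eval y ≤ y ^ (m-1) := by
        simpa [Polynomial.eval_sub, Polynomial.eval_pow, sub_nonpos] using hyle
      -- y ≠ a
      have hya : a < y := by
        rcases lt_or_eq_of_le hay with h | h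
        · exact h
        · exfalso
          rw [← h] at hyle'
          have h1 : a ^ (m-1) ≤ a ^ (n+1) :=
            pow_le_pow_of_le_one ha0.le ha1.le (by omega)
          have h2 : a ^ (n+1) < a ^ (n+1) / (1 - a) := by
            rw [lt_div_iff₀ h1a]
            nlinarith [pow_pos ha0 (n+1)]
          linarith
      have hyb' : y < b := by
        rcases lt_or_eq_of_le hyb with h | h
        · exact h
        · exfalso
          rw [h] at hyle'
          have h1 : b ^ (m-1) ≤ b ^ (n+1) :=
            pow_le_pow_of_le_one hb0.le (by linarith) (by omega)
          have h2 : b ^ (n+1) < b ^ (n+1) / (1 - b) := by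
            rw [lt_div_iff₀ h1b]
            nlinarith [pow_pos hb0 (n+1)]
          linarith
      refine ⟨y, ⟨hya, hyb'⟩, ?_⟩
      simp only [Polynomial.eval_sub, Polynomial.eval_pow, Polynomial.eval_X]
      -- need P y - y^m < y^{m+1}/(1-y), i.e. P y < y^m/(1-y); have P y ≤ y^{m-1} < y^m/(1-y)
      have hlt2 : y ^ (m-1) < y ^ m / (1 - y) := by
        have hm1 : m - 1 + 1 = m := by omega
        rw [lt_div_iff₀ h1y]
        have : y ^ m = y ^ (m-1) * y := by rw [← pow_succ, hm1]
        rw [this]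
        nlinarith [pow_pos hy0 (m-1)]
      have heq2 : y ^ m / (1 - y) = y ^ m + y ^ (m+1) / (1 - y) := by
        field_simp; ring
      linarith [heq2 ▸ lt_of_le_of_lt hyle' hlt2]
end

section
/- Suppose (P, n, a, b) is good. Then there exists f ∈ ℬ whose coefficients of degrees 0, 1, …, n agree with those of P (P is the initial part of f), and there exists x₀ ∈ (a,b) with f(x₀) = f'(x₀) = 0 (f has a double zero in (a,b)). -/
open Classical in
/-- tail of geometric series starting at degree `k+1`. -/
noncomputable def dzTail (k : ℕ) (x : ℝ) : ℝ := x ^ (k + 1) / (1 - x)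

open Classical in
/-- greedy choice of next coefficient -/
noncomputable def dzStep (a b : ℝ) (S : ℝ → ℝ) (k : ℕ) : ℝ :=
  if ∃ x ∈ Set.Icc a b, S x + x ^ k ≤ dzTail k x then 1
  else if ∃ x ∈ Set.Icc a b, S x ≤ dzTail k x then 0
  else -1

/-- partial sums of the greedy series -/
noncomputable def dzS (P : Polynomial ℝ) (n : ℕ) (a b : ℝ) : ℕ → ℝ → ℝ
  | 0 => fun x => P.eval x
  | j + 1 => fun x =>
      dzS P n a b j x + dzStep a b (dzS P n a b j) (n + j + 1) * x ^ (n + j + 1)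

/-- coefficients of the greedy series -/
noncomputable def dzC (P : Polynomial ℝ) (n : ℕ) (a b : ℝ) (k : ℕ) : ℝ :=
  if k ≤ n then P.coeff k else dzStep a b (dzS P n a b (k - n - 1)) k

lemma dzStep_mem (a b : ℝ) (S : ℝ → ℝ) (k : ℕ) :
    dzStep a b S k = -1 ∨ dzStep a b S k = 0 ∨ dzStep a b S k = 1 := by
  unfold dzStep; split_ifs <;> simp

lemma dzC_mem {P : Polynomial ℝ} {n : ℕ} {a b : ℝ}
    (hc : ∀ i, P.coeff i = -1 ∨ P.coeff i = 0 ∨ P.coeff i = 1) (i : ℕ) :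
    dzC P n a b i = -1 ∨ dzC P n a b i = 0 ∨ dzC P n a b i = 1 := by
  unfold dzC; split_ifs
  · exact hc i
  · exact dzStep_mem _ _ _ _

lemma dzC_abs_le {P : Polynomial ℝ} {n : ℕ} {a b : ℝ}
    (hc : ∀ i, P.coeff i = -1 ∨ P.coeff i = 0 ∨ P.coeff i = 1) (i : ℕ) :
    |dzC P n a b i| ≤ 1 := by
  rcases dzC_mem hc i with h | h | h <;> rw [h] <;> norm_num

lemma dzC_of_gt {P : Polynomial ℝ} {n : ℕ} {a b : ℝ} {k : ℕ} (hk : n < k) :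
    dzC P n a b k = dzStep a b (dzS P n a b (k - n - 1)) k := by
  unfold dzC; rw [if_neg (by omega)]

lemma dzS_eq_sum {P : Polynomial ℝ} {n : ℕ} (hP : P.natDegree ≤ n) (a b : ℝ) :
    ∀ j x, dzS P n a b j x = ∑ i ∈ Finset.range (n + j + 1), dzC P n a b i * x ^ i := by
  intro j
  induction j with
  | zero =>
    intro x
    show Polynomial.eval x P = _
    rw [Polynomial.eval_eq_sum_range' (lt_of_le_of_lt hP (Nat.lt_succ_self n))]
    apply Finset.sum_congr rfl
    intro i hi
    rw [Finset.mem_range] at hi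
    rw [dzC, if_pos (by omega)]
  | succ j ih =>
    intro x
    have hnj : n + (j + 1) + 1 = (n + j + 1) + 1 := by omega
    show dzS P n a b j x + dzStep a b (dzS P n a b j) (n + j + 1) * x ^ (n + j + 1) = _
    have hidx : n + j + 1 - n - 1 = j := by omega
    rw [hnj]
    conv_rhs => rw [Finset.sum_range_succ]
    rw [ih x, dzC_of_gt (show n < n + j + 1 by omega), hidx]

lemma dzTail_succ {x : ℝ} (hx : x ≠ 1) (k : ℕ) :
    dzTail k x = x ^ (k + 1) + dzTail (k + 1) x := by
  unfold dzTail
  have : 1 - x ≠ 0 := by intro h; apply hx; linarith [sub_eq_zero.mp h]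
  field_simp
  ring

lemma dzS_invariant {P : Polynomial ℝ} {n : ℕ} {a b : ℝ} (hab : a < b) (hb : b < 1)
    (h0 : ∃ x ∈ Set.Ioo a b, P.eval x < dzTail n x) :
    ∀ j, ∃ x ∈ Set.Icc a b, dzS P n a b j x ≤ dzTail (n + j) x := by
  intro j
  induction j with
  | zero =>
    obtain ⟨x, hx, h⟩ := h0
    exact ⟨x, Set.Ioo_subset_Icc_self hx, le_of_lt h⟩
  | succ j ih =>
    have hnj : n + (j + 1) = (n + j + 1) := by omega
    rw [hnj]
    by_cases h1 : ∃ x ∈ Set.Icc a b, dzS P n a b j x + x ^ (n + j + 1) ≤ dzTail (n + j + 1) x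
    · obtain ⟨x, hx, h⟩ := h1
      refine ⟨x, hx, ?_⟩
      show dzS P n a b j x + dzStep a b (dzS P n a b j) (n + j + 1) * x ^ (n + j + 1) ≤ _
      rw [dzStep, if_pos ⟨x, hx, h⟩]
      linarith
    · by_cases h2 : ∃ x ∈ Set.Icc a b, dzS P n a b j x ≤ dzTail (n + j + 1) x
      · obtain ⟨x, hx, h⟩ := h2
        refine ⟨x, hx, ?_⟩
        show dzS P n a b j x + dzStep a b (dzS P n a b j) (n + j + 1) * x ^ (n + j + 1) ≤ _
        rw [dzStep, if_neg h1, if_pos ⟨x, hx, h⟩]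
        linarith
      · obtain ⟨x, hx, h⟩ := ih
        refine ⟨x, hx, ?_⟩
        have hx1 : x ≠ 1 := by
          have := hx.2; intro he; rw [he] at this; linarith
        show dzS P n a b j x + dzStep a b (dzS P n a b j) (n + j + 1) * x ^ (n + j + 1) ≤ _
        rw [dzStep, if_neg h1, if_neg h2]
        rw [dzTail_succ hx1 (n + j)] at h
        linarith

lemma dzStep_ne_one {a b : ℝ} {S : ℝ → ℝ} {k : ℕ} (h : dzStep a b S k ≠ 1) :
    ∀ x ∈ Set.Icc a b, dzTail k x < S x + (dzStep a b S k + 1) * x ^ k := by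
  unfold dzStep at h ⊢
  split_ifs at h ⊢ with h1 h2
  · exact absurd rfl h
  · push_neg at h1
    intro x hx
    have := h1 x hx
    linarith
  · push_neg at h2
    intro x hx
    have := h2 x hx
    linarith

lemma dz_summable {c : ℕ → ℝ} (hc : ∀ i, |c i| ≤ 1) {x : ℝ} (hx : |x| < 1) :
    Summable fun k => c k * x ^ k := by
  apply Summable.of_norm_bounded (summable_geometric_of_lt_one (abs_nonneg x) hx)
  intro i
  rw [Real.norm_eq_abs, abs_mul, abs_pow]
  calc |c i| * |x| ^ i ≤ 1 * |x| ^ i :=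
        mul_le_mul_of_nonneg_right (hc i) (pow_nonneg (abs_nonneg x) i)
    _ = |x| ^ i := one_mul _

lemma dz_geom_tail {x : ℝ} (hx0 : 0 ≤ x) (hx1 : x < 1) (N : ℕ) :
    ∑' m : ℕ, x ^ (m + N) = x ^ N / (1 - x) := by
  simp_rw [pow_add]
  rw [tsum_mul_right, tsum_geometric_of_lt_one hx0 hx1, div_eq_mul_inv, mul_comm]

lemma dz_geom_tail_summable {x : ℝ} (hx0 : 0 ≤ x) (hx1 : x < 1) (N : ℕ) :
    Summable fun m : ℕ => x ^ (m + N) := by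
  simp_rw [pow_add]
  exact (summable_geometric_of_lt_one hx0 hx1).mul_right _

lemma dz_tsum_tail_le {c : ℕ → ℝ} (hc : ∀ i, |c i| ≤ 1) {x : ℝ}
    (hx0 : 0 ≤ x) (hx1 : x < 1) (N : ℕ) :
    |∑' m : ℕ, c (m + N) * x ^ (m + N)| ≤ x ^ N / (1 - x) := by
  have hxa : |x| < 1 := by rwa [abs_of_nonneg hx0]
  have hg := dz_geom_tail_summable hx0 hx1 N
  have hb : ∀ m : ℕ, ‖c (m + N) * x ^ (m + N)‖ ≤ x ^ (m + N) := by
    intro m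
    rw [Real.norm_eq_abs, abs_mul, abs_pow, abs_of_nonneg hx0]
    calc |c (m + N)| * x ^ (m + N) ≤ 1 * x ^ (m + N) :=
          mul_le_mul_of_nonneg_right (hc _) (pow_nonneg hx0 _)
      _ = x ^ (m + N) := one_mul _
  have hsn : Summable fun m : ℕ => ‖c (m + N) * x ^ (m + N)‖ :=
    Summable.of_nonneg_of_le (fun _ => norm_nonneg _) hb hg
  calc |∑' m : ℕ, c (m + N) * x ^ (m + N)| ≤ ∑' m : ℕ, ‖c (m + N) * x ^ (m + N)‖ :=
        norm_tsum_le_tsum_norm hsn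
    _ ≤ ∑' m : ℕ, x ^ (m + N) := Summable.tsum_le_tsum hb hsn hg
    _ = x ^ N / (1 - x) := dz_geom_tail hx0 hx1 N

lemma dz_f_decomp {P : Polynomial ℝ} {n : ℕ} {a b : ℝ} (hP : P.natDegree ≤ n)
    (hc : ∀ i, |dzC P n a b i| ≤ 1) {x : ℝ} (hx0 : 0 ≤ x) (hx1 : x < 1) (j : ℕ) :
    (∑' k : ℕ, dzC P n a b k * x ^ k) =
      dzS P n a b j x + ∑' m : ℕ, dzC P n a b (m + (n + j + 1)) * x ^ (m + (n + j + 1)) := by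
  have hs : Summable fun k => dzC P n a b k * x ^ k :=
    dz_summable hc (by rwa [abs_of_nonneg hx0])
  rw [dzS_eq_sum hP, ← hs.sum_add_tsum_nat_add (n + j + 1)]

lemma dz_f_sub_S {P : Polynomial ℝ} {n : ℕ} {a b : ℝ} (hP : P.natDegree ≤ n)
    (hc : ∀ i, |dzC P n a b i| ≤ 1) {x : ℝ} (hx0 : 0 ≤ x) (hx1 : x < 1) (j : ℕ) :
    |(∑' k : ℕ, dzC P n a b k * x ^ k) - dzS P n a b j x| ≤ dzTail (n + j) x := by
  rw [dz_f_decomp hP hc hx0 hx1 j, add_sub_cancel_left]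
  exact dz_tsum_tail_le hc hx0 hx1 (n + j + 1)

lemma dz_nonneg {P : Polynomial ℝ} {n : ℕ} {a b : ℝ} (hP : P.natDegree ≤ n)
    (hc : ∀ i, |dzC P n a b i| ≤ 1)
    (ha : 1 / 2 < a) (hb : b < 1)
    (hpos : ∀ x ∈ Set.Icc a b, P.eval x > 0) :
    ∀ x ∈ Set.Icc a b, 0 ≤ ∑' k : ℕ, dzC P n a b k * x ^ k := by
  intro x hx
  have hx0 : 0 ≤ x := by have := hx.1; linarith
  have hx1 : x < 1 := lt_of_le_of_lt hx.2 hb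
  have hx2 : 1 / 2 < x := lt_of_lt_of_le ha hx.1
  have h1x : 0 < 1 - x := by linarith
  by_cases hall : ∀ j, dzStep a b (dzS P n a b j) (n + j + 1) = 1
  · -- all tail coefficients are 1
    have hone : ∀ m : ℕ, dzC P n a b (m + (n + 0 + 1)) = 1 := by
      intro m
      have hk : m + (n + 0 + 1) = n + m + 1 := by omega
      rw [hk, dzC_of_gt (by omega)]
      have h2 : n + m + 1 - n - 1 = m := by omega
      rw [h2]
      exact hall m
    rw [dz_f_decomp hP hc hx0 hx1 0]
    have ht : (∑' m : ℕ, dzC P n a b (m + (n + 0 + 1)) * x ^ (m + (n + 0 + 1)))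
        = x ^ (n + 0 + 1) / (1 - x) := by
      rw [tsum_congr (fun m => by rw [hone m, one_mul])]
      exact dz_geom_tail hx0 hx1 _
    rw [ht]
    have h0 : (0:ℝ) < P.eval x := hpos x hx
    have h1 : dzS P n a b 0 x = P.eval x := rfl
    have h2 : 0 ≤ x ^ (n + 0 + 1) / (1 - x) :=
      div_nonneg (pow_nonneg hx0 _) (le_of_lt h1x)
    rw [h1]; linarith
  · by_cases hinf : ∀ J, ∃ j, J ≤ j ∧ dzStep a b (dzS P n a b j) (n + j + 1) ≠ 1
    · -- infinitely many non-one steps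
      by_contra hneg
      push_neg at hneg
      obtain ⟨K, hK⟩ := exists_pow_lt_of_lt_one (show (0:ℝ) < -(∑' k : ℕ, dzC P n a b k * x ^ k)
        by linarith) hb
      obtain ⟨j, hjK, hj1⟩ := hinf K
      have hmax := dzStep_ne_one hj1 x hx
      have hdec := abs_le.mp (dz_f_sub_S hP hc hx0 hx1 (j + 1))
      have hSj : dzS P n a b (j + 1) x
          = dzS P n a b j x + dzStep a b (dzS P n a b j) (n + j + 1) * x ^ (n + j + 1) := rfl
      have hkk : n + (j + 1) = n + j + 1 := by omega
      rw [hkk] at hdec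
      -- f x ≥ S_{j+1} - tail > -x^k
      have hxk : x ^ (n + j + 1) ≤ b ^ (n + j + 1) := by
        apply pow_le_pow_left₀ hx0 hx.2
      have hbk : b ^ (n + j + 1) ≤ b ^ K := by
        apply pow_le_pow_of_le_one (le_trans hx0 hx.2) (le_of_lt hb) (by omega)
      have : (∑' k : ℕ, dzC P n a b k * x ^ k) > -(b ^ K) := by
        have h1 := hdec.1
        nlinarith [hmax, hSj]
      linarith
    · -- finitely many non-one steps; take the last one
      push_neg at hinf
      have hQ : ∃ J, ∀ j, J ≤ j → dzStep a b (dzS P n a b j) (n + j + 1) = 1 := by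
        obtain ⟨J, hJ⟩ := hinf
        exact ⟨J, fun j hj => by
          by_contra hne
          exact hne ((hJ j hj))⟩
      classical
      obtain ⟨m, hm⟩ : ∃ m, Nat.find hQ = m + 1 := by
        rcases Nat.exists_eq_succ_of_ne_zero (show Nat.find hQ ≠ 0 by
          intro h0
          exact hall (fun j => Nat.find_spec hQ j (h0 ▸ Nat.zero_le j))) with ⟨m, hm⟩
        exact ⟨m, hm⟩
      have hQJ : ∀ j, m + 1 ≤ j → dzStep a b (dzS P n a b j) (n + j + 1) = 1 := by
        have := Nat.find_spec hQ
        rw [hm] at this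
        exact this
      have hm1 : dzStep a b (dzS P n a b m) (n + m + 1) ≠ 1 := by
        intro h
        have : ¬ (∀ j, m ≤ j → dzStep a b (dzS P n a b j) (n + j + 1) = 1) :=
          Nat.find_min hQ (by omega)
        apply this
        intro j hj
        rcases eq_or_lt_of_le hj with rfl | hlt
        · exact h
        · exact hQJ j (by omega)
      have hone : ∀ l : ℕ, dzC P n a b (l + (n + (m + 1) + 1)) = 1 := by
        intro l
        have hk : l + (n + (m + 1) + 1) = n + (m + 1 + l) + 1 := by omega
        rw [hk, dzC_of_gt (by omega)]
        have h2 : n + (m + 1 + l) + 1 - n - 1 = m + 1 + l := by omega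
        rw [h2]
        exact hQJ _ (by omega)
      rw [dz_f_decomp hP hc hx0 hx1 (m + 1)]
      have ht : (∑' l : ℕ, dzC P n a b (l + (n + (m + 1) + 1)) * x ^ (l + (n + (m + 1) + 1)))
          = x ^ (n + (m + 1) + 1) / (1 - x) := by
        rw [tsum_congr (fun l => by rw [hone l, one_mul])]
        exact dz_geom_tail hx0 hx1 _
      rw [ht]
      have hSm : dzS P n a b (m + 1) x
          = dzS P n a b m x + dzStep a b (dzS P n a b m) (n + m + 1) * x ^ (n + m + 1) := rfl
      have hmax := dzStep_ne_one hm1 x hx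
      have hkk : n + (m + 1) + 1 = (n + m + 1) + 1 := by omega
      rw [hkk]
      set k := n + m + 1 with hkdef
      -- f x = S_m + v x^k + x^{k+1}/(1-x) > 2 x^{k+1}/(1-x) - x^k ≥ 0
      have htail : dzTail k x = x ^ k * x / (1 - x) := by
        rw [dzTail, pow_succ]
      have hpk : 0 ≤ x ^ k := pow_nonneg hx0 k
      have h2t : x ^ k ≤ 2 * (x ^ k * x / (1 - x)) := by
        rw [← mul_div_assoc, le_div_iff₀ h1x]
        nlinarith [hpk, hx2]
      have hfin : dzS P n a b m x + dzStep a b (dzS P n a b m) k * x ^ k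
          > dzTail k x - x ^ k := by nlinarith [hmax]
      rw [hSm]
      have : x ^ (k + 1) / (1 - x) = dzTail k x := rfl
      rw [this]
      rw [htail] at *
      linarith

lemma dz_continuousOn {c : ℕ → ℝ} (hc : ∀ i, |c i| ≤ 1) {a b : ℝ}
    (ha0 : 0 < a) (hb0 : 0 ≤ b) (hb : b < 1) :
    ContinuousOn (fun x => ∑' k : ℕ, c k * x ^ k) (Set.Icc a b) := by
  apply (tendstoUniformlyOn_tsum (u := fun k => b ^ k)
    (summable_geometric_of_lt_one hb0 hb) ?_).continuousOn
  · exact (Filter.Eventually.of_forall fun t =>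
      (continuous_finset_sum (f := fun i (x : ℝ) => c i * x ^ i) t fun i _ => continuous_const.mul (continuous_pow i)).continuousOn).frequently
  · intro k x hx
    rw [Real.norm_eq_abs, abs_mul, abs_pow]
    have hxb : |x| ≤ b := by
      rw [abs_of_nonneg (by linarith [hx.1] : (0:ℝ) ≤ x)]
      exact hx.2
    calc |c k| * |x| ^ k ≤ 1 * b ^ k :=
          mul_le_mul (hc k) (pow_le_pow_left₀ (abs_nonneg x) hxb k)
            (pow_nonneg (abs_nonneg x) k) zero_le_one
      _ = b ^ k := one_mul _


theorem stmt14 (P : Polynomial ℝ) (n : ℕ) (a b : ℝ) (hg : Good P n a b) :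
    ∃ c : ℕ → ℝ, c 0 = 1 ∧ (∀ i, c i = -1 ∨ c i = 0 ∨ c i = 1) ∧
      (∀ i ≤ n, c i = P.coeff i) ∧
      ∃ x₀ ∈ Set.Ioo a b, (∑' k : ℕ, c k * x₀ ^ k) = 0 ∧
        (∑' k : ℕ, ((k : ℝ) + 1) * c (k + 1) * x₀ ^ k) = 0 := by
  obtain ⟨hP, h0, hcoef, ha, hab, hb, hPa, hPb, hpos, hex⟩ := hg
  have hcabs : ∀ i, |dzC P n a b i| ≤ 1 := dzC_abs_le hcoef
  have ha0 : (0:ℝ) < a := by linarith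
  have hb0 : (0:ℝ) ≤ b := by linarith
  refine ⟨dzC P n a b, ?_, dzC_mem hcoef, ?_, ?_⟩
  · rw [dzC, if_pos (Nat.zero_le n)]; exact h0
  · intro i hi; rw [dzC, if_pos hi]
  -- main analytic part
  have hcont := dz_continuousOn hcabs ha0 hb0 hb
  obtain ⟨x₀, hx₀, hmin⟩ := isCompact_Icc.exists_isMinOn
    ⟨a, Set.left_mem_Icc.mpr (le_of_lt hab)⟩ hcont
  have hx₀0 : 0 ≤ x₀ := by have := hx₀.1; linarith
  have hx₀1 : x₀ < 1 := lt_of_le_of_lt hx₀.2 hb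
  set f := fun x : ℝ => ∑' k : ℕ, dzC P n a b k * x ^ k with hf
  -- f x₀ ≤ 0
  have hfle : ∀ j : ℕ, f x₀ ≤ 2 * b ^ j / (1 - b) := by
    intro j
    obtain ⟨x, hxm, hxle⟩ := dzS_invariant hab hb hex j
    have hx0' : 0 ≤ x := by have := hxm.1; linarith
    have hx1' : x < 1 := lt_of_le_of_lt hxm.2 hb
    have h1 := (abs_le.mp (dz_f_sub_S hP hcabs hx0' hx1' j)).2
    have htb : dzTail (n + j) x ≤ b ^ j / (1 - b) := by
      rw [dzTail]
      apply div_le_div₀ (pow_nonneg hb0 j) ?_ (by linarith) (by linarith [hxm.2])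
      calc x ^ (n + j + 1) ≤ b ^ (n + j + 1) := pow_le_pow_left₀ hx0' hxm.2 _
        _ ≤ b ^ j := pow_le_pow_of_le_one hb0 (le_of_lt hb) (by omega)
    have hminx := hmin hxm
    have : f x ≤ 2 * dzTail (n + j) x := by
      have := hxle
      simp only [hf]
      linarith [h1]
    calc f x₀ ≤ f x := hminx
      _ ≤ 2 * dzTail (n + j) x := this
      _ ≤ 2 * (b ^ j / (1 - b)) := by linarith [htb]
      _ = 2 * b ^ j / (1 - b) := by ring
  have hlim : Filter.Tendsto (fun j : ℕ => 2 * b ^ j / (1 - b)) Filter.atTop (nhds 0) := by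
    have h := ((tendsto_pow_atTop_nhds_zero_of_lt_one hb0 hb).const_mul 2).div_const (1 - b)
    simpa using h
  have hfx₀le : f x₀ ≤ 0 := ge_of_tendsto' hlim hfle
  have hfx₀ge : 0 ≤ f x₀ := dz_nonneg hP hcabs ha hb hpos x₀ hx₀
  have hf0 : f x₀ = 0 := le_antisymm hfx₀le hfx₀ge
  -- x₀ is interior
  have hbound : ∀ y ∈ Set.Icc a b, P.eval y > dzTail n y → 0 < f y := by
    intro y hy hPy
    have hy0 : 0 ≤ y := by have := hy.1; linarith
    have hy1 : y < 1 := lt_of_le_of_lt hy.2 hb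
    have h1 := (abs_le.mp (dz_f_sub_S hP hcabs hy0 hy1 0)).1
    have hS0 : dzS P n a b 0 y = P.eval y := rfl
    have hTT : dzTail (n + 0) y = dzTail n y := rfl
    rw [hS0, hTT] at h1
    simp only [hf]
    linarith
  have hfa : 0 < f a :=
    hbound a (Set.left_mem_Icc.mpr (le_of_lt hab)) hPa
  have hfb : 0 < f b :=
    hbound b (Set.right_mem_Icc.mpr (le_of_lt hab)) hPb
  have hx₀a : a < x₀ := by
    rcases lt_or_eq_of_le hx₀.1 with h | h
    · exact h
    · exfalso; rw [← h] at hf0; linarith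
  have hx₀b : x₀ < b := by
    rcases lt_or_eq_of_le hx₀.2 with h | h
    · exact h
    · exfalso; rw [h] at hf0; linarith
  refine ⟨x₀, ⟨hx₀a, hx₀b⟩, hf0, ?_⟩
  -- derivative vanishes
  set r : ℝ := (1 + b) / 2 with hr
  have hr1 : r < 1 := by rw [hr]; linarith
  have hbr : b < r := by rw [hr]; linarith
  have hr0 : (0:ℝ) < r := by rw [hr]; linarith
  set u : ℕ → ℝ := fun k => (k : ℝ) * r ^ (k - 1) with hu
  have hu_sum : Summable u := by
    rw [← summable_nat_add_iff 1]
    have h1 : Summable fun k : ℕ => (k : ℝ) ^ 1 * r ^ k :=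
      summable_pow_mul_geometric_of_norm_lt_one 1 (by
        rw [Real.norm_eq_abs, abs_of_pos hr0]; exact hr1)
    have h2 : Summable fun k : ℕ => r ^ k := summable_geometric_of_lt_one hr0.le hr1
    apply (h1.add h2).congr
    intro k
    simp only [hu]
    push_cast
    ring
  have hg' : ∀ (k : ℕ), ∀ y ∈ Set.Ioo (-r) r,
      ‖dzC P n a b k * ((k : ℝ) * y ^ (k - 1))‖ ≤ u k := by
    intro k y hy
    have hyr : |y| ≤ r := le_of_lt (abs_lt.mpr ⟨hy.1, hy.2⟩)
    rw [Real.norm_eq_abs, abs_mul, abs_mul, abs_pow, Nat.abs_cast]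
    calc |dzC P n a b k| * ((k:ℝ) * |y| ^ (k-1)) ≤ 1 * ((k:ℝ) * r ^ (k-1)) := by
          apply mul_le_mul (hcabs k) ?_ ?_ zero_le_one
          · exact mul_le_mul_of_nonneg_left (pow_le_pow_left₀ (abs_nonneg y) hyr _)
              (Nat.cast_nonneg k)
          · positivity
      _ = u k := one_mul _
  have hx₀mem : x₀ ∈ Set.Ioo (-r) r :=
    ⟨by linarith, lt_of_le_of_lt hx₀.2 hbr⟩
  have hderiv : HasDerivAt f (∑' k : ℕ, dzC P n a b k * ((k : ℝ) * x₀ ^ (k - 1))) x₀ := by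
    apply hasDerivAt_tsum_of_isPreconnected hu_sum isOpen_Ioo isPreconnected_Ioo
      (fun k y _ => (hasDerivAt_pow k y).const_mul (dzC P n a b k)) hg'
      hx₀mem ?_ hx₀mem
    exact dz_summable hcabs (by rwa [abs_of_nonneg hx₀0])
  have hlocal : IsLocalMin f x₀ := hmin.isLocalMin (Icc_mem_nhds hx₀a hx₀b)
  have hD : (∑' k : ℕ, dzC P n a b k * ((k : ℝ) * x₀ ^ (k - 1))) = 0 :=
    hlocal.hasDerivAt_eq_zero hderiv
  have hsumH : Summable fun k : ℕ => dzC P n a b k * ((k : ℝ) * x₀ ^ (k - 1)) :=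
    Summable.of_norm_bounded hu_sum (fun k => hg' k x₀ hx₀mem)
  have hshift := hsumH.tsum_eq_zero_add
  rw [hD] at hshift
  have hzero : dzC P n a b 0 * ((0 : ℕ) * x₀ ^ (0 - 1) : ℝ) = 0 := by
    simp
  rw [hzero, zero_add] at hshift
  rw [show (fun k : ℕ => ((k : ℝ) + 1) * dzC P n a b (k + 1) * x₀ ^ k)
      = fun k : ℕ => dzC P n a b (k + 1) * (((k + 1 : ℕ) : ℝ) * x₀ ^ (k + 1 - 1)) by
    funext k
    have : k + 1 - 1 = k := rfl
    rw [this]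
    push_cast
    ring]
  exact hshift.symm
end
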